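/- arXiv:1503.04617 — 12 statements merged into one kernel-verified Lean document; each statement's English description precedes it below -/
import Mathlib

section
/- Let T be a finite tree whose vertices are properly 2-colored black and white. If every leaf of T is white, then the number of white vertices of T is strictly larger than the number of black vertices of T. -/
/-!
Black vertices are not leaves, so each has degree at least 2, and every edge has exactly one
black end. Hence `2 · #black ≤ #edges = #vertices - 1 = #black + #white - 1`.
-/

open Finset

namespace SimpleGraph

variable {V : Type*} {G : SimpleGraph V}

theorem isBipartiteWith_of_bool_coloring [Fintype V] {c : V → Bool}
    (hc : ∀ v w, G.Adj v w → c v ≠ c w) :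
    G.IsBipartiteWith ↑({v | c v = false} : Finset V) ↑({v | c v = true} : Finset V) where
  disjoint := by
    rw [disjoint_coe]
    exact disjoint_filter.mpr fun v _ hf ht => by simp [hf] at ht
  mem_of_adj v w hadj := by
    have := hc v w hadj
    cases hv : c v <;> cases hw : c w <;> simp_all

theorem IsBipartiteWith.two_mul_card_le_card_edgeFinset [Fintype V] [DecidableRel G.Adj]
    {s t : Finset V} (h : G.IsBipartiteWith s t) (hs : ∀ v ∈ s, 2 ≤ G.degree v) :
    2 * #s ≤ #G.edgeFinset :=
  calc 2 * #s = ∑ _v ∈ s, 2 := by rw [sum_const, smul_eq_mul, mul_comm]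
    _ ≤ ∑ v ∈ s, G.degree v := sum_le_sum hs
    _ = #G.edgeFinset := isBipartiteWith_sum_degrees_eq_card_edges h

end SimpleGraph

open SimpleGraph

theorem tree_all_leaves_white_more_white_general
    {V : Type*} [Fintype V]
    (G : SimpleGraph V) [DecidableRel G.Adj]
    (hconn : G.Connected) (hacyc : G.IsAcyclic)
    (c : V → Bool)
    (hproper : ∀ v w, G.Adj v w → c v ≠ c w)
    (hleaf : ∀ v, G.degree v ≤ 1 → c v = true) :
    (Finset.univ.filter fun v => c v = false).card <
      (Finset.univ.filter fun v => c v = true).card := by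
  have hblack : ∀ v ∈ ({v | c v = false} : Finset V), 2 ≤ G.degree v := fun v hv => by
    by_contra! hdeg
    simp [hleaf v (by omega)] at hv
  have hedges := (isBipartiteWith_of_bool_coloring hproper).two_mul_card_le_card_edgeFinset hblack
  have htree : #G.edgeFinset + 1 = Fintype.card V := IsTree.card_edgeFinset ⟨hconn, hacyc⟩
  have hsplit : #({v | c v = false} : Finset V) + #({v | c v = true} : Finset V)
      = Fintype.card V := by
    simpa using card_filter_add_card_filter_not (s := univ) (fun v => c v = false)
  omega

/-- Let `T` be a finite tree (connected acyclic graph) whose vertices are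
properly 2-colored black and white (here `c v = true` means white, `c v = false` black).
If every leaf (vertex of degree at most 1) is white, then the number of white vertices
is strictly larger than the number of black vertices. -/
theorem tree_all_leaves_white_more_white
    {V : Type*} [Fintype V] [DecidableEq V]
    (G : SimpleGraph V) [DecidableRel G.Adj]
    (hconn : G.Connected) (hacyc : G.IsAcyclic)
    (c : V → Bool)
    (hproper : ∀ v w, G.Adj v w → c v ≠ c w)
    (hleaf : ∀ v, G.degree v ≤ 1 → c v = true) :
    (Finset.univ.filter fun v => c v = false).card <
      (Finset.univ.filter fun v => c v = true).card :=
  tree_all_leaves_white_more_white_general G hconn hacyc c hproper hleaf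
end

section
/- If G is a finite connected bipartite graph with n black and n white vertices (n ≥ 1), then the graph G × I_{2n-1} (the 'prism' of G of height 2n-1) admits a perfect matching. -/
/-!
Take a spanning tree of `G`. Each of its `2n - 1` edges has exactly one white end, so the white
degrees sum to less than `2n` and some white vertex `x` is a leaf; likewise some black `y` is a
leaf. Hence `G - x - y` is connected and balanced, and by induction `(G - x - y) × I_{2n-3}`,
on layers `0, …, 2n-4`, has a perfect matching. A path `P` from `x` to `y` has odd length.
On the top layer `2n-2` match `P` along its 1st, 3rd, 5th, … edges, on layer `2n-3` match the
interior of `P` along the remaining edges, pair each vertex off `P` vertically between these two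
layers, and match the columns of `x` and `y` on layers `0, …, 2n-3` vertically.
-/

/-- The prism `G × I m`: vertices `V × Fin m`, with an edge between `(v,j)` and `(v,j+1)`
and an edge between `(v,j)` and `(w,j)` whenever `vw` is an edge of `G`. -/
def prism {V : Type*} (G : SimpleGraph V) (m : ℕ) : SimpleGraph (V × Fin m) where
  Adj p q := (p.1 = q.1 ∧ (p.2.val + 1 = q.2.val ∨ q.2.val + 1 = p.2.val)) ∨
    (G.Adj p.1 q.1 ∧ p.2 = q.2)
  symm := by
    constructor
    rintro ⟨v, j⟩ ⟨w, k⟩ (⟨h1, h2⟩ | ⟨h1, h2⟩)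
    · exact Or.inl ⟨h1.symm, h2.symm⟩
    · exact Or.inr ⟨h1.symm, h2.symm⟩
  loopless := by
    constructor
    rintro ⟨v, j⟩ (⟨-, h | h⟩ | ⟨h, -⟩)
    · omega
    · omega
    · exact G.irrefl h

open Finset Function SimpleGraph

theorem card_filter_compl_pair_add_one {α : Type*} [Fintype α] [DecidableEq α] (f : α → Bool)
    {x y : α} (hxy : f x ≠ f y) (b : Bool) :
    #{v : ↥({x, y}ᶜ : Set α) | f v = b} + 1 = #{v | f v = b} := by
  rw [← card_map (Embedding.subtype _), ← card_filter_add_card_filter_not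
    (s := ({v | f v = b} : Finset α)) (· ∉ ({x, y} : Set α))]
  congr 1
  · congr 1
    ext v
    simp [and_comm]
  · symm
    rw [card_eq_one]
    by_cases hx : f x = b
    · exact ⟨x, by ext v; simp; grind⟩
    · have hy : f y = b := by cases b <;> simp_all
      exact ⟨y, by ext v; simp; grind⟩

namespace SimpleGraph

variable {α β : Type*} {G : SimpleGraph α} {H : SimpleGraph β}

def HasPerfectMatchingOn (G : SimpleGraph α) (s : Set α) : Prop :=
  ∃ M : G.Subgraph, M.verts = s ∧ M.IsMatching

theorem hasPerfectMatchingOn_empty : G.HasPerfectMatchingOn ∅ :=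
  ⟨⊥, rfl, fun _ hv => hv.elim⟩

theorem hasPerfectMatchingOn_pair {a b : α} (h : G.Adj a b) : G.HasPerfectMatchingOn {a, b} :=
  ⟨G.subgraphOfAdj h, G.subgraphOfAdj_verts h, .subgraphOfAdj h⟩

namespace HasPerfectMatchingOn

variable {s t : Set α}

theorem union (hs : G.HasPerfectMatchingOn s) (ht : G.HasPerfectMatchingOn t)
    (hst : Disjoint s t) : G.HasPerfectMatchingOn (s ∪ t) := by
  obtain ⟨M, rfl, hM⟩ := hs
  obtain ⟨M', rfl, hM'⟩ := ht
  exact ⟨M ⊔ M', rfl, hM.sup hM' (by rwa [hM.support_eq_verts, hM'.support_eq_verts])⟩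

theorem iUnion {ι : Type*} {s : ι → Set α} (h : ∀ i, G.HasPerfectMatchingOn (s i))
    (hd : Pairwise (Disjoint on s)) : G.HasPerfectMatchingOn (⋃ i, s i) := by
  choose M hMs hM using h
  refine ⟨⨆ i, M i, by simp [hMs], Subgraph.IsMatching.iSup hM fun i j hij => ?_⟩
  simpa only [(hM _).support_eq_verts, hMs] using hd hij

theorem map {G' : SimpleGraph β} (h : G.HasPerfectMatchingOn s) (f : G ↪g G') :
    G'.HasPerfectMatchingOn (f '' s) := by
  obtain ⟨M, rfl, hM⟩ := h
  exact ⟨M.map f.toHom, rfl, hM.map f.toHom f.injective⟩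

theorem boxProd_left (h : G.HasPerfectMatchingOn s) (t : Set β) :
    (G □ H).HasPerfectMatchingOn (s ×ˢ t) := by
  have hst : s ×ˢ t = ⋃ b : t, G.boxProdLeft H b '' s := by
    ext ⟨a, b⟩
    simp
  rw [hst]
  refine iUnion (fun b => h.map (G.boxProdLeft H b)) fun b b' hbb' => ?_
  simp only [Function.onFun, Set.disjoint_left]
  rintro _ ⟨a, -, rfl⟩ ⟨a', -, h⟩
  exact hbb' (Subtype.ext (congrArg Prod.snd h).symm)

theorem boxProd_right {t : Set β} (h : H.HasPerfectMatchingOn t) (s : Set α) :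
    (G □ H).HasPerfectMatchingOn (s ×ˢ t) := by
  have hst : s ×ˢ t = ⋃ a : s, G.boxProdRight H a '' t := by
    ext ⟨a, b⟩
    simp [and_comm]
  rw [hst]
  refine iUnion (fun a => h.map (G.boxProdRight H a)) fun a a' haa' => ?_
  simp only [Function.onFun, Set.disjoint_left]
  rintro _ ⟨b, -, rfl⟩ ⟨b', -, h⟩
  exact haa' (Subtype.ext (congrArg Prod.fst h).symm)

end HasPerfectMatchingOn

theorem pathGraph_hasPerfectMatchingOn {n : ℕ} (a k : ℕ) (h : a + 2 * k ≤ n) :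
    (pathGraph n).HasPerfectMatchingOn {j | a ≤ j.val ∧ j.val < a + 2 * k} := by
  induction k with
  | zero =>
    convert hasPerfectMatchingOn_empty
    ext j
    simp
  | succ k ih =>
    have hadj : (pathGraph n).Adj ⟨a + 2 * k, by omega⟩ ⟨a + 2 * k + 1, by omega⟩ := by
      simp [pathGraph_adj]
    convert (ih (by omega)).union (hasPerfectMatchingOn_pair hadj) ?_ using 1
    · ext j
      simp [Fin.ext_iff]
      omega
    · simp [Set.disjoint_left, Fin.ext_iff]
      omega

theorem Walk.IsPath.hasPerfectMatchingOn_support : ∀ {u v : α} {p : G.Walk u v}, p.IsPath →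
    G.HasPerfectMatchingOn {w | w ∈ p.support ∧ (Odd p.length ∨ w ≠ v)}
  | _, _, .nil, _ => by simpa using hasPerfectMatchingOn_empty
  | _, _, .cons h .nil, _ => by
    convert hasPerfectMatchingOn_pair h using 1
    ext; simp
  | _, _, .cons h (.cons h' q), hp => by
    rw [Walk.cons_isPath_iff, Walk.cons_isPath_iff] at hp
    obtain ⟨⟨hq, ha⟩, hu⟩ := hp
    convert (hasPerfectMatchingOn_pair h).union hq.hasPerfectMatchingOn_support ?_ using 1
    · ext w
      simp only [Walk.support_cons, List.mem_cons, not_or] at hu ha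
      simp only [Walk.length_cons, Walk.support_cons, List.mem_cons, Nat.odd_add_one, not_not,
        Set.mem_ofPred_eq, Set.mem_union, Set.mem_insert_iff, Set.mem_singleton_iff]
      have := q.end_mem_support
      grind
    · simp only [Walk.support_cons, List.mem_cons, not_or] at hu
      simp only [Set.disjoint_left, Set.mem_insert_iff, Set.mem_singleton_iff, Set.mem_ofPred_eq]
      grind

theorem IsTree.exists_color_subsingleton_neighborSet [Fintype α] (hG : G.IsTree)
    (c : G.Coloring Bool) (b : Bool) (hb : Fintype.card α ≤ 2 * #{v | c v = b}) :
    ∃ v, c v = b ∧ (G.neighborSet v).Subsingleton := by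
  classical
  by_contra! hleaf
  have hbip : G.IsBipartiteWith ↑({v | c v = b} : Finset α) ↑({v | c v ≠ b} : Finset α) :=
    ⟨by simp [Set.disjoint_left], fun v w hvw => by
      have := c.valid hvw
      simp only [coe_filter, mem_univ, true_and, Set.mem_ofPred_eq]
      cases hv : c v <;> cases hw : c w <;> cases b <;> simp_all⟩
  have hdeg : ∀ v ∈ ({v | c v = b} : Finset α), 2 ≤ G.degree v := fun v hv => by
    rw [← card_neighborFinset_eq_degree, Nat.succ_le_iff, one_lt_card_iff_nontrivial,
      Finset.Nontrivial, coe_neighborFinset]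
    exact hleaf v (by simpa using hv)
  have hsum := Finset.sum_le_sum hdeg
  rw [isBipartiteWith_sum_degrees_eq_card_edges hbip, sum_const, smul_eq_mul] at hsum
  have := hG.card_edgeFinset
  omega

theorem Preconnected.exists_preconnected_induce_compl_pair [Fintype α] (hG : G.Preconnected)
    (c : G.Coloring Bool) {k : ℕ} (hk : 0 < k) (hw : #{v | c v = true} = k)
    (hb : #{v | c v = false} = k) :
    ∃ x y, c x = true ∧ c y = false ∧ (G.induce {x, y}ᶜ).Preconnected := by
  classical
  have hcard : Fintype.card α = 2 * k := by
    rw [← card_univ, ← card_filter_add_card_filter_not (fun v => c v = true)]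
    simp [hw, hb]
    omega
  obtain ⟨x₀, -⟩ := card_pos.mp (hw ▸ hk)
  have : Nonempty α := ⟨x₀⟩
  obtain ⟨T, hTG, hT⟩ := (Connected.mk hG).exists_isTree_le
  have hleaf (b : Bool) (hbk : #{v | c v = b} = k) :
      ∃ v, c v = b ∧ (T.neighborSet v).Subsingleton :=
    hT.exists_color_subsingleton_neighborSet (c.comp (Hom.ofLE hTG)) b (by simp [hcard, hbk])
  obtain ⟨x, hx, hxT⟩ := hleaf true hw
  obtain ⟨y, hy, hyT⟩ := hleaf false hb
  refine ⟨x, y, hx, hy, ?_⟩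
  refine (hT.connected.preconnected.induce_of_degree_eq_one fun v hv => ?_).mono
    (comap_monotone _ hTG)
  obtain rfl | rfl : v = x ∨ v = y := by simpa [or_iff_not_imp_left] using hv
  exacts [hxT, hyT]

theorem HasPerfectMatchingOn.of_induce_boxProd_pathGraph {s : Set α} {N M : ℕ} (hNM : N ≤ M)
    (h : ((G.induce s) □ pathGraph N).HasPerfectMatchingOn Set.univ) :
    (G □ pathGraph M).HasPerfectMatchingOn (s ×ˢ {j | j.val < N}) := by
  let f : ((G.induce s) □ pathGraph N) ↪g (G □ pathGraph M) :=
    { toFun := fun q => (q.1.1, Fin.castLE hNM q.2)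
      inj' := fun q q' h => by
        simp only [Prod.mk.injEq, Fin.castLE_inj] at h
        exact Prod.ext (Subtype.ext h.1) h.2
      map_rel_iff' := by
        rintro ⟨⟨v, hv⟩, j⟩ ⟨⟨w, hw⟩, k⟩
        show (G □ pathGraph M).Adj (v, Fin.castLE hNM j) (w, Fin.castLE hNM k) ↔ _
        simp [boxProd_adj, pathGraph_adj, Fin.ext_iff] }
  convert h.map f
  ext ⟨v, j⟩
  simp only [Set.mem_prod, Set.mem_ofPred_eq, Set.image_univ, Set.mem_range]
  constructor
  · rintro ⟨hv, hj⟩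
    exact ⟨(⟨v, hv⟩, ⟨j, hj⟩), rfl⟩
  · rintro ⟨⟨⟨w, hw⟩, k⟩, hq⟩
    simp only [f, RelEmbedding.coe_mk] at hq
    obtain ⟨rfl, rfl⟩ := hq
    exact ⟨hw, k.isLt⟩

theorem boxProd_pathGraph_hasPerfectMatchingOn_univ_succ {n : ℕ} {x w y : α} {h : G.Adj x w}
    {r : G.Walk w y} (hp : (Walk.cons h r).IsPath) (hr : Even r.length)
    (hW : ((G.induce {x, y}ᶜ) □ pathGraph (2 * n + 1)).HasPerfectMatchingOn Set.univ) :
    (G □ pathGraph (2 * n + 3)).HasPerfectMatchingOn Set.univ := by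
  have hxr : x ∉ r.support := (Walk.cons_isPath_iff h r).mp hp |>.2
  have hyr : y ∈ r.support := r.end_mem_support
  have hLower := hW.of_induce_boxProd_pathGraph (M := 2 * n + 3) (by omega)
  have hEnds := (pathGraph_hasPerfectMatchingOn (n := 2 * n + 3) 0 (n + 1) (by omega)
    ).boxProd_right (G := G) {x, y}
  have hPathTop := hp.hasPerfectMatchingOn_support.boxProd_left
    (H := pathGraph (2 * n + 3)) {j | j.val = 2 * n + 2}
  have hPathInterior := hp.of_cons.hasPerfectMatchingOn_support.boxProd_left
    (H := pathGraph (2 * n + 3)) {j | j.val = 2 * n + 1}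
  have hOffPath := (pathGraph_hasPerfectMatchingOn (n := 2 * n + 3) (2 * n + 1) 1 le_rfl
    ).boxProd_right (G := G) {v | v ∉ (Walk.cons h r).support}
  have hodd : ¬ Odd r.length := Nat.not_odd_iff_even.mpr hr
  convert hLower.union (hEnds.union (hPathTop.union (hPathInterior.union hOffPath ?_) ?_) ?_) ?_
  · ext ⟨v, j⟩
    have := j.isLt
    simp [Nat.odd_add_one, hodd]
    grind
  all_goals
    simp [Set.disjoint_left, Nat.odd_add_one, hodd]
    grind

theorem boxProd_pathGraph_hasPerfectMatchingOn_univ (n : ℕ) {V : Type*} [Fintype V]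
    (G : SimpleGraph V) (c : G.Coloring Bool) (hG : G.Preconnected)
    (hw : #{v | c v = true} = n + 1) (hb : #{v | c v = false} = n + 1) :
    (G □ pathGraph (2 * n + 1)).HasPerfectMatchingOn Set.univ := by
  classical
  induction n generalizing V with
  | zero =>
    obtain ⟨x, hx⟩ := card_eq_one.mp hw
    obtain ⟨y, hy⟩ := card_eq_one.mp hb
    obtain ⟨hcx, hx⟩ := eq_singleton_iff_unique_mem.mp hx
    obtain ⟨hcy, hy⟩ := eq_singleton_iff_unique_mem.mp hy
    rw [mem_filter_univ] at hcx hcy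
    obtain ⟨p, hp⟩ := hG.exists_isPath x y
    have hodd : Odd p.length := (c.odd_length_iff_not_congr p).mpr (by simp [hcx, hcy])
    convert hp.hasPerfectMatchingOn_support.boxProd_left (H := pathGraph 1) Set.univ
    ext ⟨v, j⟩
    simp only [Set.mem_univ, Set.mem_prod, Set.mem_ofPred_eq, hodd, true_or, and_true, true_iff]
    cases hv : c v
    · exact hy v (by simpa using hv) ▸ p.end_mem_support
    · exact hx v (by simpa using hv) ▸ p.start_mem_support
  | succ n ih =>
    obtain ⟨x, y, hx, hy, hW⟩ := hG.exists_preconnected_induce_compl_pair c (by omega) hw hb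
    obtain ⟨p, hp⟩ := hG.exists_isPath x y
    have hodd : Odd p.length := (c.odd_length_iff_not_congr p).mpr (by simp [hx, hy])
    have hcxy : c x ≠ c y := by simp [hx, hy]
    have hcard (b : Bool) := card_filter_compl_pair_add_one c hcxy b
    cases p with
    | nil => simp at hodd
    | cons h r =>
      have hr : Even r.length := by simpa [Nat.odd_add_one] using hodd
      refine boxProd_pathGraph_hasPerfectMatchingOn_univ_succ hp hr
        (ih _ (c.comp (Embedding.induce _).toHom) hW ?_ ?_)
      · change #{v : ↥({x, y}ᶜ : Set V) | c v = true} = n + 1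
        have := hcard true
        omega
      · change #{v : ↥({x, y}ᶜ : Set V) | c v = false} = n + 1
        have := hcard false
        omega

end SimpleGraph

theorem prism_eq_boxProd_pathGraph {V : Type*} (G : SimpleGraph V) (m : ℕ) :
    prism G m = G □ pathGraph m := by
  ext ⟨v, j⟩ ⟨w, k⟩
  simp [prism, boxProd_adj, pathGraph_adj]
  tauto

theorem prism_has_perfect_matching_general
    {V : Type*} [Fintype V]
    (G : SimpleGraph V) (hconn : G.Connected)
    (c : V → Bool) (hproper : ∀ v w, G.Adj v w → c v ≠ c w)
    (n : ℕ)
    (hwhite : (Finset.univ.filter fun v => c v = true).card = n)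
    (hblack : (Finset.univ.filter fun v => c v = false).card = n) :
    ∃ M : (prism G (2 * n - 1)).Subgraph, M.IsPerfectMatching := by
  suffices (prism G (2 * n - 1)).HasPerfectMatchingOn Set.univ by
    obtain ⟨M, hMverts, hM⟩ := this
    exact ⟨M, hM, Subgraph.isSpanning_iff.mpr hMverts⟩
  rw [prism_eq_boxProd_pathGraph]
  cases n with
  | zero =>
    convert hasPerfectMatchingOn_empty
    exact Set.univ_eq_empty_iff.mpr ⟨fun q => q.2.elim0⟩
  | succ n =>
    exact boxProd_pathGraph_hasPerfectMatchingOn_univ n G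
      (.mk c fun h => hproper _ _ h) hconn.preconnected hwhite hblack

/-- If `G` is a finite connected bipartite graph with `n` black and `n` white
vertices (`n ≥ 1`), then the prism `G × I_{2n-1}` admits a perfect matching.
Here `c v = true` means white, `c v = false` means black, and `c` is a proper 2-coloring. -/
theorem prism_has_perfect_matching
    {V : Type*} [Fintype V] [DecidableEq V]
    (G : SimpleGraph V) (hconn : G.Connected)
    (c : V → Bool) (hproper : ∀ v w, G.Adj v w → c v ≠ c w)
    (n : ℕ) (hn : 1 ≤ n)
    (hwhite : (Finset.univ.filter fun v => c v = true).card = n)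
    (hblack : (Finset.univ.filter fun v => c v = false).card = n) :
    ∃ M : (prism G (2 * n - 1)).Subgraph, M.IsPerfectMatching :=
  prism_has_perfect_matching_general G hconn c hproper n hwhite hblack
end

section
/- For any tiling t of a region R by dominoes and any unit coordinate vector u, the u-pretwist equals the (−u)-pretwist: T^{−u}(t) = T^{u}(t). -/
/-!
Swapping the summation indices turns `T^{-u}(t)` into `Σ τ^{-u}(d1, d0)`, so it suffices that
`τ^{-u}(d1, d0) = τ^u(d0, d1)` for any two tiles. The determinants agree after swapping two rows
and negating the third. A domino is a closed box, and for `u = e_i` the `u`-shade of a box is the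
open slab beyond its top face in direction `i`; reflecting through the origin, the `(-u)`-shade is
the open slab below its bottom face. Distinct tiles have disjoint interiors, so some coordinate
separates their boxes; if their projections along `e_i` overlap, that coordinate is `i`, and then
both conditions say that `d1` lies above `d0`.
-/

open scoped Classical

noncomputable section

/-- The closed unit (basic) cube with minimal corner `x ∈ ℤ³`. -/
def cube (x : Fin 3 → ℤ) : Set (Fin 3 → ℝ) :=
  {p | ∀ i, (x i : ℝ) ≤ p i ∧ p i ≤ (x i : ℝ) + 1}

/-- A domino is encoded as an ordered pair of cells (minimal corners):
first the white cell, then the black cell.  Its underlying point set: -/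
def dominoSet (d : (Fin 3 → ℤ) × (Fin 3 → ℤ)) : Set (Fin 3 → ℝ) :=
  cube d.1 ∪ cube d.2

/-- `v(d)`: the vector from the center of the white cube of `d` to the center of
its black cube. -/
def vvec (d : (Fin 3 → ℤ) × (Fin 3 → ℤ)) : Fin 3 → ℝ :=
  fun i => (d.2 i : ℝ) - (d.1 i : ℝ)

/-- The open `u`-shade of a set `X`: the interior of `(X + [0,∞)·u) \ X`. -/
def shade (u : Fin 3 → ℝ) (X : Set (Fin 3 → ℝ)) : Set (Fin 3 → ℝ) :=
  interior ({p | ∃ x ∈ X, ∃ s : ℝ, 0 ≤ s ∧ p = x + s • u} \ X)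

/-- The effect `τ^u(d0,d1)`: `(1/4)·det(v(d1), v(d0), u)` if `d1` meets the open
`u`-shade of `d0`, and `0` otherwise. -/
def effect (u : Fin 3 → ℝ) (d0 d1 : (Fin 3 → ℤ) × (Fin 3 → ℤ)) : ℝ :=
  if (dominoSet d1 ∩ shade u (dominoSet d0)).Nonempty then
    (1 / 4) * (Matrix.of ![vvec d1, vvec d0, u]).det
  else 0

/-- The `u`-pretwist `T^u(t) = Σ_{d0,d1 ∈ t} τ^u(d0,d1)`. -/
def pretwist (u : Fin 3 → ℝ) (t : Finset ((Fin 3 → ℤ) × (Fin 3 → ℤ))) : ℝ :=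
  ∑ d0 ∈ t, ∑ d1 ∈ t, effect u d0 d1

/-- `d` is a domino: its two cells are face-adjacent, the first cell being white
(even coordinate sum) and hence the second black. -/
def IsDomino (d : (Fin 3 → ℤ) × (Fin 3 → ℤ)) : Prop :=
  (∑ i, |d.1 i - d.2 i|) = 1 ∧ Even (∑ i, d.1 i)

/-- `t` is a tiling of the region `R` (a finite set of cells) by dominoes. -/
def IsTiling (R : Finset (Fin 3 → ℤ)) (t : Finset ((Fin 3 → ℤ) × (Fin 3 → ℤ))) : Prop :=
  (∀ d ∈ t, IsDomino d ∧ d.1 ∈ R ∧ d.2 ∈ R) ∧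
  (∀ x ∈ R, ∃! d, d ∈ t ∧ (x = d.1 ∨ x = d.2))

open Set

section Pi

variable {ι : Type*} [DecidableEq ι]

theorem self_le_add_single {α : Type*} [Semiring α] [PartialOrder α] [IsOrderedRing α]
    (x : ι → α) (k : ι) : x ≤ x + Pi.single k 1 :=
  le_add_of_nonneg_right (Pi.single_nonneg.2 zero_le_one)

theorem Icc_self_add_single (x : ι → ℤ) (k : ι) :
    Icc x (x + Pi.single k 1) = {x, x + Pi.single k 1} := by
  have hle := self_le_add_single x k
  refine Subset.antisymm (fun y ⟨hxy, hyx⟩ => ?_)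
    (insert_subset (left_mem_Icc.2 hle) (singleton_subset_iff.2 (right_mem_Icc.2 hle)))
  have hoff : ∀ j ≠ k, y j = x j := fun j hj => le_antisymm (by simpa [hj] using hyx j) (hxy j)
  have hk : y k = x k ∨ y k = x k + 1 := by
    have := hxy k
    have := hyx k
    simp only [Pi.add_apply, Pi.single_eq_same] at *
    omega
  refine hk.imp (fun hk => ?_) fun hk => ?_ <;>
  · ext j
    rcases eq_or_ne j k with rfl | hj
    · simp [hk]
    · simp [hj, hoff j hj]

theorem Icc_union_Icc_add_single (v : ι → ℝ) (k : ι) :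
    Icc v (v + 1) ∪ Icc (v + Pi.single k 1) (v + Pi.single k 1 + 1) =
      Icc v (v + Pi.single k 1 + 1) := by
  have hle := self_le_add_single v k
  refine union_subset (Icc_subset_Icc le_rfl (add_le_add_left hle 1))
    (Icc_subset_Icc hle le_rfl) |>.antisymm fun p ⟨hvp, hpv⟩ => ?_
  by_cases hpk : p k ≤ v k + 1
  · refine Or.inl ⟨hvp, fun j => ?_⟩
    rcases eq_or_ne j k with rfl | hj
    · simpa using hpk
    · simpa [hj] using hpv j
  · refine Or.inr ⟨fun j => ?_, hpv⟩
    rcases eq_or_ne j k with rfl | hj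
    · simpa using (not_le.1 hpk).le
    · simpa [hj] using hvp j

theorem Int.cast_comp_add_single (x : ι → ℤ) (k : ι) :
    (Int.cast ∘ (x + Pi.single k 1) : ι → ℝ) = Int.cast ∘ x + Pi.single k 1 := by
  ext j
  rcases eq_or_ne j k with rfl | hj
  · simp
  · simp [hj]

theorem exists_eq_single_of_sum_abs_eq_one [Fintype ι] {δ : ι → ℤ} (h : ∑ i, |δ i| = 1) :
    ∃ k, δ = Pi.single k 1 ∨ δ = -Pi.single k 1 := by
  obtain ⟨k, -, hk⟩ := Finset.exists_ne_zero_of_sum_ne_zero (h.trans_ne one_ne_zero)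
  rw [← Finset.add_sum_erase _ _ (Finset.mem_univ k)] at h
  have hrest := Finset.sum_nonneg fun j (_ : j ∈ Finset.univ.erase k) => abs_nonneg (δ j)
  have hδk : |δ k| = 1 := by
    have := abs_pos.2 (abs_ne_zero.1 hk)
    omega
  have hoff : ∀ j ≠ k, δ j = 0 := fun j hj => abs_eq_zero.1 <|
    (Finset.sum_eq_zero_iff_of_nonneg fun j _ => abs_nonneg (δ j)).1 (by omega) j
      (Finset.mem_erase.2 ⟨hj, Finset.mem_univ j⟩)
  refine ⟨k, (abs_eq zero_le_one).1 hδk |>.imp (fun h => ?_) fun h => ?_⟩ <;>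
  · ext j
    rcases eq_or_ne j k with rfl | hj
    · simp [h]
    · simp [hj, hoff j hj]

end Pi

theorem Icc_inter_Ioo_nonempty_iff {α : Type*} [LinearOrder α] [DenselyOrdered α]
    {a b c d : α} (hab : a ≤ b) (hcd : c < d) :
    (Icc a b ∩ Ioo c d).Nonempty ↔ c < b ∧ a < d := by
  refine ⟨fun ⟨x, ⟨hax, hxb⟩, hcx, hxd⟩ => ⟨hcx.trans_le hxb, hax.trans_lt hxd⟩, ?_⟩
  rintro ⟨hcb, had⟩
  obtain ⟨y, hcy, hy⟩ := exists_between (lt_min hcb hcd)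
  exact ⟨max a y, ⟨le_max_left a y, max_le hab (hy.le.trans (min_le_left b d))⟩,
    hcy.trans_le (le_max_right a y), max_lt had (hy.trans_le (min_le_right b d))⟩

theorem Icc_inter_Ioi_nonempty_iff {α : Type*} [Preorder α] {a b c : α} (hab : a ≤ b) :
    (Icc a b ∩ Ioi c).Nonempty ↔ c < b :=
  ⟨fun ⟨_, ⟨_, hxb⟩, hcx⟩ => hcx.trans_le hxb, fun h => ⟨b, right_mem_Icc.2 hab, h⟩⟩

theorem shade_neg (u : Fin 3 → ℝ) (X : Set (Fin 3 → ℝ)) : shade (-u) X = -shade u (-X) := by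
  set A := {p | ∃ x ∈ -X, ∃ s : ℝ, 0 ≤ s ∧ p = x + s • u}
  have sweep : {p | ∃ x ∈ X, ∃ s : ℝ, 0 ≤ s ∧ p = x + s • -u} = -A := by
    ext p
    simp only [A, mem_ofPred_eq, mem_neg]
    constructor
    · rintro ⟨x, hx, s, hs, rfl⟩
      exact ⟨-x, by rwa [neg_neg], s, hs, by rw [smul_neg, neg_add, neg_neg]⟩
    · rintro ⟨y, hy, s, hs, hp⟩
      exact ⟨-y, hy, s, hs, by rw [smul_neg, ← neg_add, ← hp, neg_neg]⟩
  rw [shade, shade, sweep, show -A \ X = -(A \ -X) by ext; simp]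
  exact ((Homeomorph.neg (Fin 3 → ℝ)).preimage_interior _).symm

theorem shade_single_Icc {a b : Fin 3 → ℝ} (hab : a ≤ b) (i : Fin 3) :
    shade (Pi.single i 1) (Icc a b) =
      univ.pi (Function.update (fun j => Ioo (a j) (b j)) i (Ioi (b i))) := by
  have sweep : {p | ∃ x ∈ Icc a b, ∃ s : ℝ, 0 ≤ s ∧ p = x + s • Pi.single i 1} \ Icc a b =
      univ.pi (Function.update (fun j => Icc (a j) (b j)) i (Ioi (b i))) := by
    ext p
    simp only [mem_univ_pi, Function.forall_update_iff _ fun j (S : Set ℝ) => p j ∈ S, mem_Ioi]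
    constructor
    · rintro ⟨⟨x, ⟨hax, hxb⟩, s, hs, rfl⟩, hp⟩
      have hoff : ∀ j ≠ i, (x + s • Pi.single i 1 : Fin 3 → ℝ) j = x j := fun j hj => by
        simp [hj]
      refine ⟨?_, fun j hj => by rw [hoff j hj]; exact ⟨hax j, hxb j⟩⟩
      by_contra! hpi
      refine hp ⟨hax.trans (le_add_of_nonneg_right (smul_nonneg hs (by simp))), fun j => ?_⟩
      rcases eq_or_ne j i with rfl | hj
      · simpa using hpi
      · rw [hoff j hj]
        exact hxb j
    · rintro ⟨hpi, hp⟩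
      refine ⟨⟨Function.update p i (b i), ⟨le_update_iff.2 ⟨hab i, fun j hj => (hp j hj).1⟩,
        update_le_iff.2 ⟨le_rfl, fun j hj => (hp j hj).2⟩⟩, p i - b i, by linarith, ?_⟩,
        fun h => (h.2 i).not_gt hpi⟩
      ext j
      rcases eq_or_ne j i with rfl | hj
      · simp
      · simp [hj]
  rw [shade, sweep, interior_pi_set finite_univ]
  congr 1
  ext1 j
  rcases eq_or_ne j i with rfl | hj
  · simp
  · simp [hj]

theorem Icc_inter_shade_single_Icc_nonempty_iff {a b a' b' : Fin 3 → ℝ}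
    (hab : ∀ j, a j < b j) (hab' : a' ≤ b') (i : Fin 3) :
    (Icc a' b' ∩ shade (Pi.single i 1) (Icc a b)).Nonempty ↔
      (∀ j ≠ i, a j < b' j ∧ a' j < b j) ∧ b i < b' i := by
  rw [shade_single_Icc (fun j => (hab j).le) i, ← pi_univ_Icc, ← pi_inter_distrib,
    univ_pi_nonempty_iff, Function.forall_update_iff _ fun j S => (Icc (a' j) (b' j) ∩ S).Nonempty,
    Icc_inter_Ioi_nonempty_iff (hab' i), and_comm]
  exact and_congr_left' (forall₂_congr fun j _ => Icc_inter_Ioo_nonempty_iff (hab' j) (hab j))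

theorem Icc_inter_shade_single_Icc_nonempty_comm {a b a' b' : Fin 3 → ℝ}
    (hab : ∀ j, a j < b j) (hab' : ∀ j, a' j < b' j) (hsep : ∃ j, b j ≤ a' j ∨ b' j ≤ a j)
    (i : Fin 3) :
    (Icc a' b' ∩ shade (Pi.single i 1) (Icc a b)).Nonempty ↔
      (Icc a b ∩ shade (-Pi.single i 1) (Icc a' b')).Nonempty := by
  rw [shade_neg, neg_Icc, ← nonempty_neg (s := Icc a b ∩ _), inter_neg, neg_neg, neg_Icc,
    Icc_inter_shade_single_Icc_nonempty_iff hab (fun j => (hab' j).le),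
    Icc_inter_shade_single_Icc_nonempty_iff (a := -b') (b := -a') (fun j => neg_lt_neg (hab' j))
      (neg_le_neg fun j => (hab j).le)]
  simp only [Pi.neg_apply, neg_lt_neg_iff]
  obtain ⟨j, hj⟩ := hsep
  refine and_congr_right fun hoff => ?_
  rcases eq_or_ne j i with rfl | hji
  · constructor <;> intro <;> rcases hj with h | h <;> linarith [hab j, hab' j]
  · exfalso
    rcases hj with h | h <;> linarith [(hoff j hji).1, (hoff j hji).2]

theorem cube_eq_Icc (x : Fin 3 → ℤ) : cube x = Icc (Int.cast ∘ x) (Int.cast ∘ x + 1) := by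
  ext p
  simp [cube, Pi.le_def, forall_and]

theorem cube_union_cube_add_single (x : Fin 3 → ℤ) (k : Fin 3) :
    cube x ∪ cube (x + Pi.single k 1) =
      Icc (Int.cast ∘ x) (Int.cast ∘ (x + Pi.single k 1) + 1) := by
  rw [cube_eq_Icc, cube_eq_Icc, Int.cast_comp_add_single, Icc_union_Icc_add_single]

namespace IsDomino

variable {d : (Fin 3 → ℤ) × (Fin 3 → ℤ)}

theorem exists_eq_add_single (hd : IsDomino d) :
    ∃ k, d.2 = d.1 + Pi.single k 1 ∨ d.1 = d.2 + Pi.single k 1 := by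
  obtain ⟨k, h | h⟩ := exists_eq_single_of_sum_abs_eq_one hd.1
  · exact ⟨k, Or.inr (sub_eq_iff_eq_add'.1 h)⟩
  · refine ⟨k, Or.inl (sub_eq_iff_eq_add'.1 ?_)⟩
    rw [← neg_sub]
    exact neg_eq_iff_eq_neg.2 h

theorem Icc_inf_sup (hd : IsDomino d) : Icc (d.1 ⊓ d.2) (d.1 ⊔ d.2) = {d.1, d.2} := by
  obtain ⟨x, y⟩ := d
  obtain ⟨k, rfl | rfl⟩ : ∃ k, y = x + Pi.single k 1 ∨ x = y + Pi.single k 1 :=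
    hd.exists_eq_add_single
  · rw [inf_of_le_left (self_le_add_single x k), sup_of_le_right (self_le_add_single x k),
      Icc_self_add_single]
  · rw [inf_of_le_right (self_le_add_single y k), sup_of_le_left (self_le_add_single y k),
      Icc_self_add_single, pair_comm]

theorem dominoSet_eq_Icc (hd : IsDomino d) :
    dominoSet d = Icc (Int.cast ∘ (d.1 ⊓ d.2)) (Int.cast ∘ (d.1 ⊔ d.2) + 1) := by
  obtain ⟨x, y⟩ := d
  obtain ⟨k, rfl | rfl⟩ : ∃ k, y = x + Pi.single k 1 ∨ x = y + Pi.single k 1 :=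
    hd.exists_eq_add_single
  · rw [dominoSet, inf_of_le_left (self_le_add_single x k),
      sup_of_le_right (self_le_add_single x k), cube_union_cube_add_single]
  · rw [dominoSet, union_comm, inf_of_le_right (self_le_add_single y k),
      sup_of_le_left (self_le_add_single y k), cube_union_cube_add_single]

end IsDomino

theorem effect_self (u : Fin 3 → ℝ) (d : (Fin 3 → ℤ) × (Fin 3 → ℤ)) : effect u d d = 0 := by
  simp [effect, Matrix.det_zero_of_row_eq (M := Matrix.of ![vvec d, vvec d, u]) (i := 0) (j := 1)
    (by decide) rfl]

theorem det_of_swap_neg (v w u : Fin 3 → ℝ) :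
    (Matrix.of ![v, w, -u]).det = (Matrix.of ![w, v, u]).det := by
  simp [Matrix.det_fin_three]
  ring

namespace IsTiling

variable {R : Finset (Fin 3 → ℤ)} {t : Finset ((Fin 3 → ℤ) × (Fin 3 → ℤ))}
  {d0 d1 : (Fin 3 → ℤ) × (Fin 3 → ℤ)}

theorem eq_of_mem_of_mem (ht : IsTiling R t) (h0 : d0 ∈ t) (h1 : d1 ∈ t) {c : Fin 3 → ℤ}
    (hc0 : c = d0.1 ∨ c = d0.2) (hc1 : c = d1.1 ∨ c = d1.2) : d0 = d1 := by
  have hcR : c ∈ R := by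
    rcases hc0 with rfl | rfl
    exacts [(ht.1 d0 h0).2.1, (ht.1 d0 h0).2.2]
  exact (ht.2 c hcR).unique ⟨h0, hc0⟩ ⟨h1, hc1⟩

theorem exists_separating (ht : IsTiling R t) (h0 : d0 ∈ t) (h1 : d1 ∈ t) (hne : d0 ≠ d1) :
    ∃ j, (d0.1 ⊔ d0.2) j < (d1.1 ⊓ d1.2) j ∨ (d1.1 ⊔ d1.2) j < (d0.1 ⊓ d0.2) j := by
  by_contra! hover
  set c := d0.1 ⊓ d0.2 ⊔ d1.1 ⊓ d1.2
  have hc0 : c ∈ Icc (d0.1 ⊓ d0.2) (d0.1 ⊔ d0.2) :=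
    ⟨le_sup_left, sup_le inf_le_sup fun j => (hover j).1⟩
  have hc1 : c ∈ Icc (d1.1 ⊓ d1.2) (d1.1 ⊔ d1.2) :=
    ⟨le_sup_right, sup_le (fun j => (hover j).2) inf_le_sup⟩
  rw [(ht.1 d0 h0).1.Icc_inf_sup] at hc0
  rw [(ht.1 d1 h1).1.Icc_inf_sup] at hc1
  exact hne (ht.eq_of_mem_of_mem h0 h1 hc0 hc1)

theorem effect_neg_single_swap (ht : IsTiling R t) (h0 : d0 ∈ t) (h1 : d1 ∈ t) (i : Fin 3) :
    effect (-Pi.single i 1) d1 d0 = effect (Pi.single i 1) d0 d1 := by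
  rcases eq_or_ne d0 d1 with rfl | hne
  · rw [effect_self, effect_self]
  have hbox (d : (Fin 3 → ℤ) × (Fin 3 → ℤ)) (j : Fin 3) :
      (Int.cast ∘ (d.1 ⊓ d.2) : Fin 3 → ℝ) j < (Int.cast ∘ (d.1 ⊔ d.2) + 1 : Fin 3 → ℝ) j := by
    simp only [Function.comp_apply, Pi.add_apply, Pi.one_apply]
    exact_mod_cast Int.lt_add_one_of_le inf_le_sup
  obtain ⟨j, hj⟩ := ht.exists_separating h0 h1 hne
  have hmeet := Icc_inter_shade_single_Icc_nonempty_comm (hbox d0) (hbox d1) ⟨j, by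
    simp only [Function.comp_apply, Pi.add_apply, Pi.one_apply]
    exact_mod_cast hj⟩ i
  rw [← (ht.1 d0 h0).1.dominoSet_eq_Icc, ← (ht.1 d1 h1).1.dominoSet_eq_Icc] at hmeet
  simp only [effect, hmeet, det_of_swap_neg]

theorem pretwist_neg_single (ht : IsTiling R t) (i : Fin 3) :
    pretwist (-Pi.single i 1) t = pretwist (Pi.single i 1) t := by
  rw [pretwist, pretwist, Finset.sum_comm]
  exact Finset.sum_congr rfl fun d0 h0 => Finset.sum_congr rfl fun d1 h1 =>
    ht.effect_neg_single_swap h0 h1 i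

end IsTiling

/-- For any tiling `t` of a region `R` by dominoes and any unit coordinate
vector `u`, the `u`-pretwist equals the `(−u)`-pretwist: `T^{−u}(t) = T^{u}(t)`. -/
theorem pretwist_neg_eq (R : Finset (Fin 3 → ℤ)) (t : Finset ((Fin 3 → ℤ) × (Fin 3 → ℤ)))
    (ht : IsTiling R t) (u : Fin 3 → ℝ)
    (hu : ∃ i : Fin 3, u = Pi.single i 1 ∨ u = -Pi.single i 1) :
    pretwist (-u) t = pretwist u t := by
  obtain ⟨i, rfl | rfl⟩ := hu
  · exact ht.pretwist_neg_single i
  · rw [neg_neg]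
    exact (ht.pretwist_neg_single i).symm

end
end

section
/- Every pseudocylinder D + [0,N]w (w a unit coordinate vector, D a planar region with connected interior, N ≥ 1) is fully balanced: for every 2×2 square Q of lattice points contained in the region with normal direction u ∈ {e_x,e_y,e_z}, the part of the region lying in the closed u-shade of Q contains equally many black and white unit cubes, and similarly for the (−u)-shade. -/
/-!
Reflect across the mid-plane of the square `Q` in a direction `b` tangent to `Q`, choosing
`b` to be the cylinder axis when the axis is tangent to `Q`. This reflection preserves the
column of cells over `Q`, fixes the height `c a`, and flips colours, since it moves one
coordinate by an odd amount. It maps the region into itself because a pseudocylinder is a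
product of base and height: when `b` is the axis the footprint is kept and the new height is
that of the cell of `R` at `Q` guaranteed by `Q ⊆ R`; otherwise the height is kept and that
cell supplies the footprint.
-/

open Finset

theorem Finset.card_filter_eq_card_filter_not_of_involutive {α : Type*} (s : Finset α)
    (P : α → Prop) [DecidablePred P] (σ : α → α) (hσ : Function.Involutive σ)
    (hs : ∀ x ∈ s, σ x ∈ s) (hP : ∀ x, P (σ x) ↔ ¬ P x) :
    #(s.filter P) = #(s.filter fun x => ¬ P x) := by
  refine card_nbij' σ σ ?_ ?_ (fun x _ => hσ x) (fun x _ => hσ x)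
  · intro x hx
    simp only [coe_filter, Set.mem_ofPred_eq] at hx ⊢
    exact ⟨hs x hx.1, by simpa [hP] using hx.2⟩
  · intro x hx
    simp only [coe_filter, Set.mem_ofPred_eq] at hx ⊢
    exact ⟨hs x hx.1, (hP x).2 hx.2⟩

section Reflection

variable {ι : Type*} [DecidableEq ι]

/-- The reflection of `ℤ^ι` across the hyperplane `x b = t + 1/2`. -/
def reflectAt (b : ι) (t : ℤ) (c : ι → ℤ) : ι → ℤ :=
  Function.update c b (2 * t + 1 - c b)

@[simp]
theorem reflectAt_apply_self (b : ι) (t : ℤ) (c : ι → ℤ) :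
    reflectAt b t c b = 2 * t + 1 - c b := by
  simp [reflectAt]

@[simp]
theorem reflectAt_apply_of_ne {b i : ι} (h : i ≠ b) (t : ℤ) (c : ι → ℤ) :
    reflectAt b t c i = c i := by
  simp [reflectAt, h]

theorem reflectAt_involutive (b : ι) (t : ℤ) : Function.Involutive (reflectAt b t) := by
  intro c
  ext i
  by_cases h : i = b
  · subst h; simp
  · simp [h]

theorem even_sum_reflectAt_iff [Fintype ι] (b : ι) (t : ℤ) (c : ι → ℤ) :
    Even (∑ i, reflectAt b t c i) ↔ ¬ Even (∑ i, c i) := by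
  have hsum : ∑ i, reflectAt b t c i = 2 * (t - c b) + 1 + ∑ i, c i := by
    rw [reflectAt, sum_update_of_mem (mem_univ b), ← add_sum_erase _ _ (mem_univ b),
      sdiff_singleton_eq_erase]
    ring
  rw [hsum, Int.even_add, Int.even_add_one, iff_false_intro (not_not.2 (even_two_mul _)),
    false_iff]

end Reflection

section Cylinder

variable {ι : Type*} [DecidableEq ι] {j : ι} {N : ℕ} {D R : Finset (ι → ℤ)}

theorem mem_cylinder_iff (hDplane : ∀ x ∈ D, x j = 0)
    (hR : ∀ c : ι → ℤ, c ∈ R ↔ ∃ x ∈ D, ∃ k : ℕ, k < N ∧ c = x + Pi.single j (k : ℤ))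
    (c : ι → ℤ) :
    c ∈ R ↔ 0 ≤ c j ∧ c j < N ∧ Function.update c j 0 ∈ D := by
  rw [hR]
  constructor
  · rintro ⟨x, hx, k, hk, rfl⟩
    have hxj := hDplane x hx
    refine ⟨by simp [hxj], by simpa [hxj] using hk, ?_⟩
    convert hx using 1
    ext i
    by_cases h : i = j
    · subst h; simp [hxj]
    · simp [h]
  · rintro ⟨h0, hN, hD⟩
    refine ⟨Function.update c j 0, hD, (c j).toNat, by omega, ?_⟩
    ext i
    by_cases h : i = j
    · subst h; simp; omega
    · simp [h]

/-- A pseudocylinder is the product of its base and its height interval. -/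
theorem mem_cylinder_of_mix (hDplane : ∀ x ∈ D, x j = 0)
    (hR : ∀ c : ι → ℤ, c ∈ R ↔ ∃ x ∈ D, ∃ k : ℕ, k < N ∧ c = x + Pi.single j (k : ℤ))
    {x y z : ι → ℤ} (hx : x ∈ R) (hy : y ∈ R) (hzx : z j = x j) (hzy : ∀ i, i ≠ j → z i = y i) :
    z ∈ R := by
  rw [mem_cylinder_iff hDplane hR] at hx hy ⊢
  have hfoot : Function.update z j 0 = Function.update y j 0 := by
    ext i
    by_cases h : i = j
    · subst h; simp
    · simp [h, hzy i h]
  exact ⟨hzx ▸ hx.1, hzx ▸ hx.2.1, hfoot ▸ hy.2.2⟩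

theorem reflectAt_mem_cylinder (hDplane : ∀ x ∈ D, x j = 0)
    (hR : ∀ c : ι → ℤ, c ∈ R ↔ ∃ x ∈ D, ∃ k : ℕ, k < N ∧ c = x + Pi.single j (k : ℤ))
    {a b : ι} (hba : b ≠ a) (hab : a = j ∨ b = j) (p : ι → ℤ)
    (hQ : ∀ c : ι → ℤ, (∀ i, i ≠ a → (c i = p i ∨ c i = p i + 1)) →
      (Function.update c a (p a) ∈ R ∨ Function.update c a (p a - 1) ∈ R))
    {c : ι → ℤ} (hc : c ∈ R) (hcQ : ∀ i, i ≠ a → (c i = p i ∨ c i = p i + 1)) :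
    reflectAt b (p b) c ∈ R ∧
      ∀ i, i ≠ a → (reflectAt b (p b) c i = p i ∨ reflectAt b (p b) c i = p i + 1) := by
  set σc := reflectAt b (p b) c
  have hσcQ : ∀ i, i ≠ a → (σc i = p i ∨ σc i = p i + 1) := by
    intro i hia
    by_cases h : i = b
    · subst h
      have := hcQ i hia
      simp only [σc, reflectAt_apply_self]
      omega
    · simpa [σc, h] using hcQ i hia
  obtain ⟨v, hd⟩ : ∃ v, Function.update σc a v ∈ R := by
    rcases hQ σc hσcQ with h | h
    exacts [⟨_, h⟩, ⟨_, h⟩]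
  refine ⟨?_, hσcQ⟩
  rcases hab with rfl | rfl
  · exact mem_cylinder_of_mix hDplane hR hc hd (reflectAt_apply_of_ne hba.symm _ _)
      (fun i h => by simp [h])
  · exact mem_cylinder_of_mix hDplane hR hd hc (Function.update_of_ne hba _ _).symm
      (fun i h => by simp [σc, h])

end Cylinder

theorem exists_ne_and_or_eq {ι : Type*} [Nontrivial ι] (a j : ι) :
    ∃ b, b ≠ a ∧ (a = j ∨ b = j) := by
  by_cases h : a = j
  · obtain ⟨b, hb⟩ := exists_ne a
    exact ⟨b, hb, .inl h⟩
  · exact ⟨j, Ne.symm h, .inr rfl⟩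

theorem cylinder_shade_balanced {ι : Type*} [Fintype ι] [DecidableEq ι] [Nontrivial ι]
    (j : ι) (N : ℕ) (D : Finset (ι → ℤ)) (hDplane : ∀ x ∈ D, x j = 0)
    (R : Finset (ι → ℤ))
    (hR : ∀ c : ι → ℤ, c ∈ R ↔ ∃ x ∈ D, ∃ k : ℕ, k < N ∧ c = x + Pi.single j (k : ℤ))
    (a : ι) (p : ι → ℤ)
    (hQ : ∀ c : ι → ℤ, (∀ i, i ≠ a → (c i = p i ∨ c i = p i + 1)) →
      (Function.update c a (p a) ∈ R ∨ Function.update c a (p a - 1) ∈ R))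
    (P : ℤ → Prop) [DecidablePred P] :
    ((R.filter fun c => (∀ i, i ≠ a → (c i = p i ∨ c i = p i + 1)) ∧ P (c a)).filter
        fun c => Even (∑ i, c i)).card =
      ((R.filter fun c => (∀ i, i ≠ a → (c i = p i ∨ c i = p i + 1)) ∧ P (c a)).filter
        fun c => ¬ Even (∑ i, c i)).card := by
  obtain ⟨b, hba, hab⟩ := exists_ne_and_or_eq a j
  refine card_filter_eq_card_filter_not_of_involutive _ _ _ (reflectAt_involutive b (p b))
    ?_ (even_sum_reflectAt_iff b (p b))
  intro c hc
  rw [mem_filter] at hc ⊢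
  obtain ⟨hσR, hσQ⟩ := reflectAt_mem_cylinder hDplane hR hba hab p hQ hc.1 hc.2.1
  exact ⟨hσR, hσQ, by simpa [hba.symm] using hc.2.2⟩

theorem pseudocylinder_fully_balanced_general
    (j : Fin 3) (N : ℕ)
    (D : Finset (Fin 3 → ℤ))
    (hDplane : ∀ x ∈ D, x j = 0)
    (R : Finset (Fin 3 → ℤ))
    (hR : ∀ c : Fin 3 → ℤ, c ∈ R ↔ ∃ x ∈ D, ∃ k : ℕ, k < N ∧ c = x + Pi.single j (k : ℤ))
    (a : Fin 3) (p : Fin 3 → ℤ)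
    (hQ : ∀ c : Fin 3 → ℤ, (∀ i, i ≠ a → (c i = p i ∨ c i = p i + 1)) →
      (Function.update c a (p a) ∈ R ∨ Function.update c a (p a - 1) ∈ R)) :
    ((R.filter fun c => (∀ i, i ≠ a → (c i = p i ∨ c i = p i + 1)) ∧ p a ≤ c a).filter
        fun c => Even (∑ i, c i)).card =
      ((R.filter fun c => (∀ i, i ≠ a → (c i = p i ∨ c i = p i + 1)) ∧ p a ≤ c a).filter
        fun c => ¬ Even (∑ i, c i)).card ∧
    ((R.filter fun c => (∀ i, i ≠ a → (c i = p i ∨ c i = p i + 1)) ∧ c a < p a).filter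
        fun c => Even (∑ i, c i)).card =
      ((R.filter fun c => (∀ i, i ≠ a → (c i = p i ∨ c i = p i + 1)) ∧ c a < p a).filter
        fun c => ¬ Even (∑ i, c i)).card :=
  ⟨by convert cylinder_shade_balanced j N D hDplane R hR a p hQ (p a ≤ ·),
    by convert cylinder_shade_balanced j N D hDplane R hR a p hQ (· < p a)⟩

/-- Every pseudocylinder `D + [0,N]·w` (`w = e_j` a unit coordinate vector,
`D` a planar region with connected interior, `N ≥ 1`) is fully balanced.

Encoding: cells are minimal corners in `ℤ³`; the base `D` is a nonempty finite set of
cells lying in the plane `x j = 0` whose face-adjacency graph is connected (equivalent to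
`D` having connected interior); the region is `R = {x + k·e_j | x ∈ D, 0 ≤ k < N}`.
A 2×2 square `Q` with normal `e_a` has corner `p` (it lies at height `p a` and its
footprint in the other two coordinates is `[p i, p i + 2]`); `Q ⊆ R` is expressed by
`hQ` (each point of `Q` lies in a cube of `R` directly above or below).  The conclusion:
both the part of `R` in the closed `+e_a`-shade of `Q` (cells with `p a ≤ c a`) and the
part in the closed `−e_a`-shade (cells with `c a < p a`) contain equally many white
(even coordinate sum) and black cells. -/
theorem pseudocylinder_fully_balanced
    (j : Fin 3) (N : ℕ) (hN : 1 ≤ N)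
    (D : Finset (Fin 3 → ℤ)) (hDne : D.Nonempty)
    (hDplane : ∀ x ∈ D, x j = 0)
    (hDconn : ∀ x ∈ D, ∀ y ∈ D,
      Relation.ReflTransGen (fun a b => a ∈ D ∧ b ∈ D ∧ (∑ i, |a i - b i|) = 1) x y)
    (R : Finset (Fin 3 → ℤ))
    (hR : ∀ c : Fin 3 → ℤ, c ∈ R ↔ ∃ x ∈ D, ∃ k : ℕ, k < N ∧ c = x + Pi.single j (k : ℤ))
    (a : Fin 3) (p : Fin 3 → ℤ)
    (hQ : ∀ c : Fin 3 → ℤ, (∀ i, i ≠ a → (c i = p i ∨ c i = p i + 1)) →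
      (Function.update c a (p a) ∈ R ∨ Function.update c a (p a - 1) ∈ R)) :
    ((R.filter fun c => (∀ i, i ≠ a → (c i = p i ∨ c i = p i + 1)) ∧ p a ≤ c a).filter
        fun c => Even (∑ i, c i)).card =
      ((R.filter fun c => (∀ i, i ≠ a → (c i = p i ∨ c i = p i + 1)) ∧ p a ≤ c a).filter
        fun c => ¬ Even (∑ i, c i)).card ∧
    ((R.filter fun c => (∀ i, i ≠ a → (c i = p i ∨ c i = p i + 1)) ∧ c a < p a).filter
        fun c => Even (∑ i, c i)).card =
      ((R.filter fun c => (∀ i, i ≠ a → (c i = p i ∨ c i = p i + 1)) ∧ c a < p a).filter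
        fun c => ¬ Even (∑ i, c i)).card :=
  pseudocylinder_fully_balanced_general j N D hDplane R hR a p hQ
end

section
/- Let ℓ0, ℓ1 be two unit segments of a region R (each joining centers of two face-adjacent unit cubes), and let u ∈ R^3 with ‖u‖ < 1. Then there exist s0, s1 ∈ [0,1] with ℓ0(s0) − ℓ1(s1) = u if and only if there exist i, j ∈ {0,1} and a0, a1 ∈ (−1,1) with ℓ0(i) = ℓ1(j), u = a0·v(ℓ0) + a1·v(ℓ1), (−1)^i a0 ≥ 0 and (−1)^j a1 ≤ 0. -/
/-!
Once `ℓ₀(i) = ℓ₁(j)`, the two sides correspond under `s₀ = i + a₀`, `s₁ = j - a₁`, and the sign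
conditions say exactly that `s₀, s₁ ∈ [0,1]`; so the work is to find such `i, j` with
`|s₀ - i|, |s₁ - j| < 1`. The difference `p₀ - q₀` is an integer vector while every coordinate
of `u` lies in `(-1,1)`. Off the axes of the two segments this forces `p₀` and `q₀` to agree, and
on the axis of `ℓ₀` (resp. `ℓ₁`) it leaves exactly one endpoint `ℓ₀(i)` (resp. `ℓ₁(j)`) in the
right position, at distance less than one from `ℓ₀(s₀)` (resp. `ℓ₁(s₁)`). When both segments
lie on the same axis one first slides both points along it, keeping `u` fixed, until `ℓ₁(s₁)` is
an endpoint.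
-/

/-- A point of `(ℤ + 1/2)³`, i.e. the center of a unit lattice cube. -/
def HalfLattice (p : Fin 3 → ℝ) : Prop := ∀ i, ∃ m : ℤ, p i = (m : ℝ) + 1 / 2

open Set

lemma HalfLattice.exists_int_sub_apply {p q : Fin 3 → ℝ} (hp : HalfLattice p)
    (hq : HalfLattice q) (k : Fin 3) : ∃ m : ℤ, (p - q) k = m := by
  obtain ⟨m, hm⟩ := hp k
  obtain ⟨n, hn⟩ := hq k
  exact ⟨m - n, by simp [hm, hn]⟩

lemma exists_abs_eq_one_eq_single {ι : Type*} [DecidableEq ι] {x : ι → ℝ}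
    (h : ∃ i, x = Pi.single i 1 ∨ x = -Pi.single i 1) :
    ∃ i, ∃ ε : ℝ, |ε| = 1 ∧ x = Pi.single i ε := by
  obtain ⟨i, rfl | rfl⟩ := h
  · exact ⟨i, 1, abs_one, rfl⟩
  · exact ⟨i, -1, by simp, (Pi.single_neg i 1).symm⟩

lemma abs_lt_one_of_sum_sq_lt_one {ι : Type*} [Fintype ι] {u : ι → ℝ}
    (hu : ∑ i, u i ^ 2 < 1) (k : ι) : |u k| < 1 :=
  (sq_lt_one_iff_abs_lt_one _).1 <|
    (Finset.single_le_sum (fun i _ => sq_nonneg (u i)) (Finset.mem_univ k)).trans_lt hu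

lemma eq_of_sub_eq_intCast_of_abs_sub_lt_one {x y : ℝ} (hxy : ∃ m : ℤ, x - y = m)
    (h : |x - y| < 1) : x = y := by
  obtain ⟨m, hm⟩ := hxy
  rw [hm] at h
  rw [← sub_eq_zero, hm, Int.cast_eq_zero, ← Int.abs_lt_one_iff]
  exact_mod_cast h

lemma natCast_add_mem_Icc_iff {i : ℕ} {a : ℝ} (hi : i ≤ 1) (ha : a ∈ Icc (-1 : ℝ) 1) :
    (i : ℝ) + a ∈ Icc (0 : ℝ) 1 ↔ 0 ≤ (-1 : ℝ) ^ i * a := by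
  obtain ⟨ha₀, ha₁⟩ := ha
  interval_cases i <;> norm_num [mem_Icc] <;> intros <;> linarith

lemma exists_nat_add_mul_eq_zero {m : ℤ} {ε s : ℝ} (hε : |ε| = 1) (hs : s ∈ Icc (0 : ℝ) 1)
    (hx : |m + s * ε| < 1) :
    ∃ i : ℕ, i ≤ 1 ∧ (m : ℝ) + i * ε = 0 ∧ s - i ∈ Ioo (-1 : ℝ) 1 := by
  suffices ∃ i : ℕ, i ≤ 1 ∧ (m : ℝ) + i * ε = 0 by
    obtain ⟨i, hi, hm⟩ := this
    have : (m : ℝ) + s * ε = (s - i) * ε := by linear_combination hm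
    rw [this, abs_mul, hε, mul_one] at hx
    exact ⟨i, hi, hm, abs_lt.1 hx⟩
  obtain ⟨hs₀, hs₁⟩ := hs
  rw [abs_lt] at hx
  rcases (abs_eq zero_le_one).1 hε with rfl | rfl
  · have h₁ : -2 < m := by exact_mod_cast (show (-2 : ℝ) < m by linarith)
    have h₂ : m < 1 := by exact_mod_cast (show (m : ℝ) < 1 by linarith)
    interval_cases m
    exacts [⟨1, le_rfl, by norm_num⟩, ⟨0, zero_le_one, by norm_num⟩]
  · have h₁ : -1 < m := by exact_mod_cast (show (-1 : ℝ) < m by linarith)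
    have h₂ : m < 2 := by exact_mod_cast (show (m : ℝ) < 2 by linarith)
    interval_cases m
    exacts [⟨0, zero_le_one, by norm_num⟩, ⟨1, le_rfl, by norm_num⟩]

lemma exists_sub_nat_mul_eq_sub_mul {τ s₀ s₁ : ℝ} (hτ : |τ| = 1) (hs₀ : s₀ ∈ Icc (0 : ℝ) 1)
    (hs₁ : s₁ ∈ Icc (0 : ℝ) 1) :
    ∃ t ∈ Icc (0 : ℝ) 1, ∃ j : ℕ, j ≤ 1 ∧ t - j * τ = s₀ - s₁ * τ := by
  obtain ⟨h₀, h₀'⟩ := hs₀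
  obtain ⟨h₁, h₁'⟩ := hs₁
  rcases (abs_eq zero_le_one).1 hτ with rfl | rfl
  · rcases le_total s₁ s₀ with h | h
    · exact ⟨s₀ - s₁, ⟨by linarith, by linarith⟩, 0, zero_le_one, by push_cast; ring⟩
    · exact ⟨s₀ - s₁ + 1, ⟨by linarith, by linarith⟩, 1, le_rfl, by push_cast; ring⟩
  · rcases le_total (s₀ + s₁) 1 with h | h
    · exact ⟨s₀ + s₁, ⟨by linarith, h⟩, 0, zero_le_one, by push_cast; ring⟩
    · exact ⟨s₀ + s₁ - 1, ⟨by linarith, by linarith⟩, 1, le_rfl, by push_cast; ring⟩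

section Lattice

variable {ι : Type*} [DecidableEq ι] {p q u : ι → ℝ}

lemma exists_add_nat_smul_single_eq (hd : ∀ k, ∃ m : ℤ, (p - q) k = m)
    (hu : ∀ k, |u k| < 1) {a : ι} {ε s : ℝ} (hε : |ε| = 1) (hs : s ∈ Icc (0 : ℝ) 1)
    (h : p + s • Pi.single a ε - q = u) :
    ∃ i : ℕ, i ≤ 1 ∧ p + (i : ℝ) • Pi.single a ε = q ∧ s - i ∈ Ioo (-1 : ℝ) 1 := by
  have hu_apply (k : ι) : u k = (p - q) k + s * (Pi.single a ε : ι → ℝ) k := by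
    rw [← h]; simp only [Pi.add_apply, Pi.sub_apply, Pi.smul_apply, smul_eq_mul]; ring
  obtain ⟨m, hm⟩ := hd a
  obtain ⟨i, hi, him, hsi⟩ :=
    exists_nat_add_mul_eq_zero hε hs (by simpa [hu_apply, hm] using hu a)
  refine ⟨i, hi, funext fun k => ?_, hsi⟩
  rcases eq_or_ne k a with rfl | hk
  · simp only [Pi.sub_apply] at hm
    simp only [Pi.add_apply, Pi.smul_apply, Pi.single_eq_same, smul_eq_mul]
    linarith
  · have hpq : p k = q k :=
      eq_of_sub_eq_intCast_of_abs_sub_lt_one (hd k) (by simpa [hu_apply, hk] using hu k)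
    simp [hk, hpq]

lemma exists_add_nat_smul_single_eq_add_nat_smul_single (hd : ∀ k, ∃ m : ℤ, (p - q) k = m)
    (hu : ∀ k, |u k| < 1) {a b : ι} (hab : a ≠ b) {ε₀ ε₁ s₀ s₁ : ℝ} (hε₀ : |ε₀| = 1)
    (hε₁ : |ε₁| = 1) (hs₀ : s₀ ∈ Icc (0 : ℝ) 1) (hs₁ : s₁ ∈ Icc (0 : ℝ) 1)
    (h : p + s₀ • Pi.single a ε₀ - (q + s₁ • Pi.single b ε₁) = u) :
    ∃ i j : ℕ, i ≤ 1 ∧ j ≤ 1 ∧ p + (i : ℝ) • Pi.single a ε₀ = q + (j : ℝ) • Pi.single b ε₁ ∧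
      s₀ - i ∈ Ioo (-1 : ℝ) 1 ∧ s₁ - j ∈ Ioo (-1 : ℝ) 1 := by
  have hu_apply (k : ι) :
      u k = (p - q) k + s₀ * (Pi.single a ε₀ : ι → ℝ) k + s₁ * (Pi.single b (-ε₁) : ι → ℝ) k := by
    rw [← h, Pi.single_neg]
    simp only [Pi.add_apply, Pi.sub_apply, Pi.smul_apply, Pi.neg_apply, smul_eq_mul]
    ring
  obtain ⟨m, hm⟩ := hd a
  obtain ⟨n, hn⟩ := hd b
  obtain ⟨i, hi, him, hsi⟩ :=
    exists_nat_add_mul_eq_zero hε₀ hs₀ (by simpa [hu_apply, hm, hab] using hu a)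
  obtain ⟨j, hj, hjn, hsj⟩ := exists_nat_add_mul_eq_zero (by rwa [abs_neg]) hs₁
    (by simpa [hu_apply, hn, hab.symm] using hu b)
  refine ⟨i, j, hi, hj, funext fun k => ?_, hsi, hsj⟩
  simp only [Pi.sub_apply] at hm hn
  rcases eq_or_ne k a with rfl | hka
  · simp only [Pi.add_apply, Pi.smul_apply, smul_eq_mul, Pi.single_eq_same,
      Pi.single_eq_of_ne hab]
    linarith
  rcases eq_or_ne k b with rfl | hkb
  · simp only [Pi.add_apply, Pi.smul_apply, smul_eq_mul, Pi.single_eq_same,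
      Pi.single_eq_of_ne hka]
    linarith
  have hpq : p k = q k :=
    eq_of_sub_eq_intCast_of_abs_sub_lt_one (hd k) (by simpa [hu_apply, hka, hkb] using hu k)
  simp [hka, hkb, hpq]

end Lattice

lemma exists_common_endpoint {p q u : Fin 3 → ℝ} {a b : Fin 3} {ε₀ ε₁ s₀ s₁ : ℝ}
    (hp : HalfLattice p) (hq : HalfLattice q) (hq' : HalfLattice (q + Pi.single b ε₁))
    (hε₀ : |ε₀| = 1) (hε₁ : |ε₁| = 1) (hu : ∀ k, |u k| < 1)
    (hs₀ : s₀ ∈ Icc (0 : ℝ) 1) (hs₁ : s₁ ∈ Icc (0 : ℝ) 1)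
    (h : p + s₀ • Pi.single a ε₀ - (q + s₁ • Pi.single b ε₁) = u) :
    ∃ i j : ℕ, i ≤ 1 ∧ j ≤ 1 ∧ p + (i : ℝ) • Pi.single a ε₀ = q + (j : ℝ) • Pi.single b ε₁ ∧
      ∃ t₀ ∈ Icc (0 : ℝ) 1, ∃ t₁ ∈ Icc (0 : ℝ) 1, t₀ - i ∈ Ioo (-1 : ℝ) 1 ∧
        t₁ - j ∈ Ioo (-1 : ℝ) 1 ∧ p + t₀ • Pi.single a ε₀ - (q + t₁ • Pi.single b ε₁) = u := by
  rcases eq_or_ne a b with rfl | hab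
  · obtain ⟨t, ht, j, hj, htj⟩ :=
      exists_sub_nat_mul_eq_sub_mul (τ := ε₀ * ε₁) (by rw [abs_mul, hε₀, hε₁, one_mul]) hs₀ hs₁
    have hw : Pi.single a ε₁ = (ε₀ * ε₁) • Pi.single a ε₀ := by
      rw [← Pi.single_smul', smul_eq_mul, mul_right_comm, ← sq, ← sq_abs, hε₀, one_pow,
        one_mul]
    have hqj : HalfLattice (q + (j : ℝ) • Pi.single a ε₁) := by
      interval_cases j <;> simpa
    have ht' : p + t • Pi.single a ε₀ - (q + (j : ℝ) • Pi.single a ε₁) = u := by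
      rw [← h, hw]
      linear_combination (norm := module) htj • Pi.single a ε₀
    obtain ⟨i, hi, hend, hti⟩ := exists_add_nat_smul_single_eq (hp.exists_int_sub_apply hqj) hu
      hε₀ ht ht'
    exact ⟨i, j, hi, hj, hend, t, ht, j, ⟨j.cast_nonneg, by exact_mod_cast hj⟩, hti,
      by norm_num, ht'⟩
  · obtain ⟨i, j, hi, hj, hend, hi₀, hj₁⟩ := exists_add_nat_smul_single_eq_add_nat_smul_single
      (hp.exists_int_sub_apply hq) hu hab hε₀ hε₁ hs₀ hs₁ h
    exact ⟨i, j, hi, hj, hend, s₀, hs₀, s₁, hs₁, hi₀, hj₁, h⟩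

lemma exists_params_iff_exists_coeffs {E : Type*} [AddCommGroup E] [Module ℝ E]
    {p q v w u : E} {i j : ℕ} (hi : i ≤ 1) (hj : j ≤ 1)
    (hend : p + (i : ℝ) • v = q + (j : ℝ) • w) :
    (∃ s₀ ∈ Icc (0 : ℝ) 1, ∃ s₁ ∈ Icc (0 : ℝ) 1, s₀ - i ∈ Ioo (-1 : ℝ) 1 ∧
        s₁ - j ∈ Ioo (-1 : ℝ) 1 ∧ p + s₀ • v - (q + s₁ • w) = u) ↔
      ∃ a₀ a₁ : ℝ, a₀ ∈ Ioo (-1 : ℝ) 1 ∧ a₁ ∈ Ioo (-1 : ℝ) 1 ∧ u = a₀ • v + a₁ • w ∧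
        0 ≤ (-1 : ℝ) ^ i * a₀ ∧ (-1 : ℝ) ^ j * a₁ ≤ 0 := by
  constructor
  · rintro ⟨s₀, hs₀, s₁, hs₁, hi₀, hj₁, rfl⟩
    refine ⟨s₀ - i, -(s₁ - j), hi₀, neg_mem_Ioo_iff.2 (by rwa [neg_neg]), ?_, ?_, ?_⟩
    · linear_combination (norm := module) hend
    · exact (natCast_add_mem_Icc_iff hi (Ioo_subset_Icc_self hi₀)).1 (by rwa [add_sub_cancel])
    · rw [mul_neg, neg_nonpos]
      exact (natCast_add_mem_Icc_iff hj (Ioo_subset_Icc_self hj₁)).1 (by rwa [add_sub_cancel])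
  · rintro ⟨a₀, a₁, ha₀, ha₁, rfl, h₀, h₁⟩
    have ha₁' : -a₁ ∈ Ioo (-1 : ℝ) 1 := neg_mem_Ioo_iff.2 (by rwa [neg_neg])
    refine ⟨i + a₀, (natCast_add_mem_Icc_iff hi (Ioo_subset_Icc_self ha₀)).2 h₀, j + -a₁,
      (natCast_add_mem_Icc_iff hj (Ioo_subset_Icc_self ha₁')).2 (by rwa [mul_neg, neg_nonneg]),
      by rwa [add_sub_cancel_left], by rwa [add_sub_cancel_left], ?_⟩
    linear_combination (norm := module) hend

theorem segment_intersection_characterization_general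
    (p0 p1 q0 q1 : Fin 3 → ℝ)
    (hp0 : HalfLattice p0)
    (hq0 : HalfLattice q0) (hq1 : HalfLattice q1)
    (hstep0 : ∃ i : Fin 3, p1 - p0 = Pi.single i 1 ∨ p1 - p0 = -Pi.single i 1)
    (hstep1 : ∃ i : Fin 3, q1 - q0 = Pi.single i 1 ∨ q1 - q0 = -Pi.single i 1)
    (u : Fin 3 → ℝ) (hu : ∑ i, (u i) ^ 2 < 1) :
    (∃ s0 ∈ Set.Icc (0 : ℝ) 1, ∃ s1 ∈ Set.Icc (0 : ℝ) 1,
        (p0 + s0 • (p1 - p0)) - (q0 + s1 • (q1 - q0)) = u) ↔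
    (∃ i j : ℕ, i ≤ 1 ∧ j ≤ 1 ∧ ∃ a0 a1 : ℝ,
        a0 ∈ Set.Ioo (-1 : ℝ) 1 ∧ a1 ∈ Set.Ioo (-1 : ℝ) 1 ∧
        p0 + (i : ℝ) • (p1 - p0) = q0 + (j : ℝ) • (q1 - q0) ∧
        u = a0 • (p1 - p0) + a1 • (q1 - q0) ∧
        0 ≤ (-1 : ℝ) ^ i * a0 ∧ (-1 : ℝ) ^ j * a1 ≤ 0) := by
  obtain ⟨a, ε₀, hε₀, hv⟩ := exists_abs_eq_one_eq_single hstep0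
  obtain ⟨b, ε₁, hε₁, hw⟩ := exists_abs_eq_one_eq_single hstep1
  have hq₁ : HalfLattice (q0 + Pi.single b ε₁) := by rwa [← hw, add_sub_cancel]
  rw [hv, hw]
  constructor
  · rintro ⟨s₀, hs₀, s₁, hs₁, h⟩
    obtain ⟨i, j, hi, hj, hend, hs⟩ := exists_common_endpoint hp0 hq0 hq₁ hε₀ hε₁
      (abs_lt_one_of_sum_sq_lt_one hu) hs₀ hs₁ h
    obtain ⟨a₀, a₁, ha₀, ha₁, hu, hsign⟩ := (exists_params_iff_exists_coeffs hi hj hend).1 hs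
    exact ⟨i, j, hi, hj, a₀, a₁, ha₀, ha₁, hend, hu, hsign⟩
  · rintro ⟨i, j, hi, hj, a₀, a₁, ha₀, ha₁, hend, hu, hsign⟩
    obtain ⟨s₀, hs₀, s₁, hs₁, -, -, h⟩ :=
      (exists_params_iff_exists_coeffs hi hj hend).2 ⟨a₀, a₁, ha₀, ha₁, hu, hsign⟩
    exact ⟨s₀, hs₀, s₁, hs₁, h⟩

/-- Let `ℓ0, ℓ1` be two unit segments of a region (each joining centers of
two face-adjacent unit cubes, here `ℓ0(s) = p0 + s·(p1−p0)`, `ℓ1(s) = q0 + s·(q1−q0)`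
with `p0,p1,q0,q1 ∈ (ℤ+1/2)³` differing by unit coordinate vectors), and let `u ∈ ℝ³`
with `‖u‖ < 1` (Euclidean).  Then there exist `s0, s1 ∈ [0,1]` with
`ℓ0(s0) − ℓ1(s1) = u` if and only if there exist `i, j ∈ {0,1}` and
`a0, a1 ∈ (−1,1)` with `ℓ0(i) = ℓ1(j)`, `u = a0·v(ℓ0) + a1·v(ℓ1)`,
`(−1)^i a0 ≥ 0` and `(−1)^j a1 ≤ 0`. -/
theorem segment_intersection_characterization
    (p0 p1 q0 q1 : Fin 3 → ℝ)
    (hp0 : HalfLattice p0) (hp1 : HalfLattice p1)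
    (hq0 : HalfLattice q0) (hq1 : HalfLattice q1)
    (hstep0 : ∃ i : Fin 3, p1 - p0 = Pi.single i 1 ∨ p1 - p0 = -Pi.single i 1)
    (hstep1 : ∃ i : Fin 3, q1 - q0 = Pi.single i 1 ∨ q1 - q0 = -Pi.single i 1)
    (u : Fin 3 → ℝ) (hu : ∑ i, (u i) ^ 2 < 1) :
    (∃ s0 ∈ Set.Icc (0 : ℝ) 1, ∃ s1 ∈ Set.Icc (0 : ℝ) 1,
        (p0 + s0 • (p1 - p0)) - (q0 + s1 • (q1 - q0)) = u) ↔
    (∃ i j : ℕ, i ≤ 1 ∧ j ≤ 1 ∧ ∃ a0 a1 : ℝ,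
        a0 ∈ Set.Ioo (-1 : ℝ) 1 ∧ a1 ∈ Set.Ioo (-1 : ℝ) 1 ∧
        p0 + (i : ℝ) • (p1 - p0) = q0 + (j : ℝ) • (q1 - q0) ∧
        u = a0 • (p1 - p0) + a1 • (q1 - q0) ∧
        0 ≤ (-1 : ℝ) ^ i * a0 ∧ (-1 : ℝ) ^ j * a1 ≤ 0) :=
  segment_intersection_characterization_general p0 p1 q0 q1 hp0 hq0 hq1 hstep0 hstep1 u hu
end

section
/- Let γ be a closed lattice curve in R^3 composed of unit segments joining points of (Z+1/2)^3, let β = (b1,b2,b3) be a positively oriented basis of unit coordinate vectors, and let u = a·b1 + b·b2 + c·b3 with ‖u‖ < 1 and abc ≠ 0. Then the curves γ and γ + u are disjoint. -/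
/-!
A point of the curve lies on a unit segment parallel to some coordinate axis `e_d`, so all of its
coordinates other than the `d`-th are half-integers. Given two points `γ s` and `γ s'`, pick a
coordinate `j` avoiding both of their directions: `γ s j - γ s' j` is then an integer. Since the
`bᵢ` are signed coordinate vectors with nonzero determinant, they form a signed permutation
matrix, so the `j`-th coordinate of `u` is `±a`, `±b` or `±c`: nonzero and of absolute value
less than `1`, hence not an integer.
-/

open Finset

section SignedBasis

variable {ι : Type*} [DecidableEq ι]

def IsSignedBasisVector (v : ι → ℝ) (i : ι) : Prop :=
  v = Pi.single i 1 ∨ v = -Pi.single i 1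

namespace IsSignedBasisVector

variable {v : ι → ℝ} {i : ι}

theorem apply_of_ne (hv : IsSignedBasisVector v i) {j : ι} (hj : j ≠ i) : v j = 0 := by
  rcases hv with rfl | rfl <;> simp [Pi.single_eq_of_ne hj]

theorem apply_self_sq (hv : IsSignedBasisVector v i) : v i ^ 2 = 1 := by
  rcases hv with rfl | rfl <;> simp

end IsSignedBasisVector

variable [Fintype ι] {b : ι → ι → ℝ} {σ : ι → ι}

theorem surjective_of_isSignedBasisVector_of_det_ne_zero
    (hb : ∀ r, IsSignedBasisVector (b r) (σ r)) (hdet : (Matrix.of b).det ≠ 0) :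
    σ.Surjective := by
  intro j
  by_contra! hj
  exact hdet <| Matrix.det_eq_zero_of_column_eq_zero j fun r => (hb r).apply_of_ne (hj r).symm

/-- The rows form a signed permutation matrix, so coordinate `σ r₀` sees only the row `r₀`. -/
theorem sum_smul_apply_sq_of_isSignedBasisVector
    (hb : ∀ r, IsSignedBasisVector (b r) (σ r)) (hdet : (Matrix.of b).det ≠ 0)
    (x : ι → ℝ) (r₀ : ι) : (∑ r, x r • b r) (σ r₀) ^ 2 = x r₀ ^ 2 := by
  have hσ : σ.Injective := Finite.injective_iff_surjective.2
    (surjective_of_isSignedBasisVector_of_det_ne_zero hb hdet)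
  have hsum : (∑ r, x r • b r) (σ r₀) = x r₀ * b r₀ (σ r₀) := by
    rw [Finset.sum_apply, sum_eq_single r₀]
    · rfl
    · intro r _ hr
      simp [(hb r).apply_of_ne (hσ.ne hr).symm]
    · simp
  rw [hsum, mul_pow, (hb r₀).apply_self_sq, mul_one]

theorem sum_smul_apply_ne_intCast_of_isSignedBasisVector
    (hb : ∀ r, IsSignedBasisVector (b r) (σ r)) (hdet : (Matrix.of b).det ≠ 0)
    {x : ι → ℝ} (hx : ∀ r, x r ≠ 0) (hnorm : ∑ r, x r ^ 2 < 1) (j : ι) (m : ℤ) :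
    (∑ r, x r • b r) j ≠ m := by
  obtain ⟨r₀, rfl⟩ := surjective_of_isSignedBasisVector_of_det_ne_zero hb hdet j
  have hsq := sum_smul_apply_sq_of_isSignedBasisVector hb hdet x r₀
  intro hm
  rw [hm] at hsq
  have hm_lt : (m : ℝ) ^ 2 < 1 := hsq ▸
    (single_le_sum (fun r _ => sq_nonneg (x r)) (mem_univ r₀)).trans_lt hnorm
  have hm0 : m = 0 := Int.abs_lt_one_iff.1 <| (sq_lt_one_iff_abs_lt_one m).1 (by exact_mod_cast hm_lt)
  exact hx r₀ (pow_eq_zero_iff two_ne_zero |>.1 (by simpa [hm0] using hsq.symm))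

end SignedBasis

section LatticeCurve

variable {γ : ℝ → Fin 3 → ℝ} {k : ℕ} {d : Fin 3}

theorem apply_eq_of_mem_Icc_of_ne_direction
    (hstep : IsSignedBasisVector (γ (k + 1) - γ k) d)
    (haff : ∀ s ∈ Set.Icc (k : ℝ) (k + 1), γ s = γ k + (s - k) • (γ (k + 1) - γ k))
    {s : ℝ} (hs : s ∈ Set.Icc (k : ℝ) (k + 1)) {j : Fin 3} (hj : j ≠ d) : γ s j = γ k j := by
  simp [haff s hs, hstep.apply_of_ne hj]

theorem exists_forall_ne_eq_intCast_add_half {n : ℕ}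
    (hlat : ∀ k : ℕ, k ≤ n → ∀ i, ∃ m : ℤ, γ k i = (m : ℝ) + 1 / 2)
    (hstep : ∀ k : ℕ, k < n → ∃ i : Fin 3, IsSignedBasisVector (γ (k + 1) - γ k) i)
    (haff : ∀ k : ℕ, k < n → ∀ s ∈ Set.Icc (k : ℝ) ((k : ℝ) + 1),
      γ s = γ k + (s - (k : ℝ)) • (γ (k + 1) - γ k))
    {s : ℝ} (hs : s ∈ Set.Icc (0 : ℝ) n) :
    ∃ d : Fin 3, ∀ j ≠ d, ∃ m : ℤ, γ s j = (m : ℝ) + 1 / 2 := by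
  rcases hs.2.lt_or_eq with hsn | rfl
  · set k := ⌊s⌋₊
    have hk : k < n := (Nat.floor_lt hs.1).2 hsn
    have hsk : s ∈ Set.Icc (k : ℝ) (k + 1) := ⟨Nat.floor_le hs.1, (Nat.lt_floor_add_one s).le⟩
    obtain ⟨d, hd⟩ := hstep k hk
    refine ⟨d, fun j hj => ?_⟩
    rw [apply_eq_of_mem_Icc_of_ne_direction hd (haff k hk) hsk hj]
    exact hlat k hk.le j
  · exact ⟨0, fun j _ => hlat n le_rfl j⟩

end LatticeCurve

theorem curve_translate_disjoint_general
    (n : ℕ) (γ : ℝ → Fin 3 → ℝ)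
    (hlat : ∀ k : ℕ, k ≤ n → ∀ i, ∃ m : ℤ, γ k i = (m : ℝ) + 1 / 2)
    (hstep : ∀ k : ℕ, k < n → ∃ i : Fin 3,
      γ (k + 1) - γ k = Pi.single i 1 ∨ γ (k + 1) - γ k = -Pi.single i 1)
    (haff : ∀ k : ℕ, k < n → ∀ s ∈ Set.Icc (k : ℝ) ((k : ℝ) + 1),
      γ s = γ k + (s - (k : ℝ)) • (γ (k + 1) - γ k))
    (b1 b2 b3 : Fin 3 → ℝ)
    (hb1 : ∃ i : Fin 3, b1 = Pi.single i 1 ∨ b1 = -Pi.single i 1)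
    (hb2 : ∃ i : Fin 3, b2 = Pi.single i 1 ∨ b2 = -Pi.single i 1)
    (hb3 : ∃ i : Fin 3, b3 = Pi.single i 1 ∨ b3 = -Pi.single i 1)
    (hpos : (Matrix.of ![b1, b2, b3]).det = 1)
    (a b c : ℝ) (habc : a * b * c ≠ 0) (hnorm : a ^ 2 + b ^ 2 + c ^ 2 < 1) :
    ∀ s ∈ Set.Icc (0 : ℝ) (n : ℝ), ∀ s' ∈ Set.Icc (0 : ℝ) (n : ℝ),
      γ s ≠ γ s' + (a • b1 + b • b2 + c • b3) := by
  intro s hs s' hs' heq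
  obtain ⟨d, hd⟩ := exists_forall_ne_eq_intCast_add_half hlat hstep haff hs
  obtain ⟨d', hd'⟩ := exists_forall_ne_eq_intCast_add_half hlat hstep haff hs'
  obtain ⟨j, hjd, hjd'⟩ := Fin.exists_ne_and_ne_of_two_lt d d' (by norm_num)
  obtain ⟨m, hm⟩ := hd j hjd
  obtain ⟨m', hm'⟩ := hd' j hjd'
  obtain ⟨i1, hb1⟩ := hb1
  obtain ⟨i2, hb2⟩ := hb2
  obtain ⟨i3, hb3⟩ := hb3
  have hrows : ∀ r, IsSignedBasisVector (![b1, b2, b3] r) (![i1, i2, i3] r) := by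
    intro r; fin_cases r <;> assumption
  have hx : ∀ r, ![a, b, c] r ≠ 0 := by
    simp only [mul_ne_zero_iff] at habc
    intro r; fin_cases r <;> simp [habc]
  have hu : ∑ r, ![a, b, c] r • ![b1, b2, b3] r = a • b1 + b • b2 + c • b3 := by
    simp [Fin.sum_univ_three]
  refine sum_smul_apply_ne_intCast_of_isSignedBasisVector hrows (by simp [hpos]) hx
    (by simpa [Fin.sum_univ_three] using hnorm) j (m - m') ?_
  have hj := congrFun heq j
  rw [Pi.add_apply, hm, hm'] at hj
  rw [hu, Int.cast_sub]
  linarith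

/-- Let `γ : [0,n] → ℝ³` be a closed lattice curve composed of unit segments
joining points of `(ℤ+1/2)³`, let `β = (b1,b2,b3)` be a positively oriented basis of unit
coordinate vectors, and let `u = a·b1 + b·b2 + c·b3` with `‖u‖ < 1` (Euclidean, i.e.
`a² + b² + c² < 1`) and `abc ≠ 0`.  Then the curves `γ` and `γ + u` are disjoint. -/
theorem curve_translate_disjoint
    (n : ℕ) (hn : 0 < n) (γ : ℝ → Fin 3 → ℝ)
    (hlat : ∀ k : ℕ, k ≤ n → ∀ i, ∃ m : ℤ, γ k i = (m : ℝ) + 1 / 2)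
    (hstep : ∀ k : ℕ, k < n → ∃ i : Fin 3,
      γ (k + 1) - γ k = Pi.single i 1 ∨ γ (k + 1) - γ k = -Pi.single i 1)
    (haff : ∀ k : ℕ, k < n → ∀ s ∈ Set.Icc (k : ℝ) ((k : ℝ) + 1),
      γ s = γ k + (s - (k : ℝ)) • (γ (k + 1) - γ k))
    (hclosed : γ n = γ 0)
    (b1 b2 b3 : Fin 3 → ℝ)
    (hb1 : ∃ i : Fin 3, b1 = Pi.single i 1 ∨ b1 = -Pi.single i 1)
    (hb2 : ∃ i : Fin 3, b2 = Pi.single i 1 ∨ b2 = -Pi.single i 1)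
    (hb3 : ∃ i : Fin 3, b3 = Pi.single i 1 ∨ b3 = -Pi.single i 1)
    (hpos : (Matrix.of ![b1, b2, b3]).det = 1)
    (a b c : ℝ) (habc : a * b * c ≠ 0) (hnorm : a ^ 2 + b ^ 2 + c ^ 2 < 1) :
    ∀ s ∈ Set.Icc (0 : ℝ) (n : ℝ), ∀ s' ∈ Set.Icc (0 : ℝ) (n : ℝ),
      γ s ≠ γ s' + (a • b1 + b • b2 + c • b3) :=
  curve_translate_disjoint_general n γ hlat hstep haff b1 b2 b3 hb1 hb2 hb3 hpos a b c habc hnorm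
end

section
/- Define g*: N → Z by the recurrence bound g*(n) ≤ min over 0 ≤ k ≤ (n−1)/4 of [4k² + n − 4k + g*(n−4k−1) + 2g*(2k)] with g*(0) = 0 (g* defined as the minimal function satisfying this, i.e., g*(n) equals that minimum). Then g*(n) < 2n^{3/2} for all n ≥ 1. -/
/-!
Strong induction with the invariant `g n ≤ 2 n ⌊√n⌋ - 1`. For `n ≥ 5` put `s = ⌊√n⌋` and
`k = ⌊s / 2⌋`: then `4k + 1 ≤ n`, `⌊√(2k)⌋ ≤ k` and `⌊√(n - 4k - 1)⌋ ≤ s`, so bounding the two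
recursive terms by the invariant leaves a polynomial inequality in `n, s, k`. Since `⌊√n⌋ ≤ √n`,
the invariant gives `g n < 2 n^{3/2}`.
-/

open Real

/-- The recurrence only gives `g 3 ≤ 6`, one more than `2 · 3 · ⌊√3⌋ - 1`. -/
def sqrtBound (n : ℕ) : ℤ := if n = 0 then 0 else if n = 3 then 6 else 2 * n * Nat.sqrt n - 1

lemma sqrtBound_le (n : ℕ) : sqrtBound n ≤ 2 * n * Nat.sqrt n := by
  unfold sqrtBound
  split_ifs with h0 h3
  · simp [h0]
  · subst h3; norm_num [Nat.sqrt]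
  · linarith

lemma sqrtBound_of_five_le {n : ℕ} (hn : 5 ≤ n) : sqrtBound n = 2 * n * Nat.sqrt n - 1 := by
  rw [sqrtBound, if_neg (by omega), if_neg (by omega)]

lemma add_sqrtBound_sub_one_le {n : ℕ} (h1 : 1 ≤ n) (h4 : n ≤ 4) :
    n + sqrtBound (n - 1) ≤ sqrtBound n := by
  interval_cases n <;> norm_num [sqrtBound, Nat.sqrt]

lemma sqrtBound_lt_two_mul_rpow {n : ℕ} (hn : 1 ≤ n) :
    (sqrtBound n : ℝ) < 2 * (n : ℝ) ^ (3 / 2 : ℝ) := by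
  have hpow : (n : ℝ) ^ (3 / 2 : ℝ) = n * √n := by
    rw [show (3 / 2 : ℝ) = 1 / 2 + 1 by norm_num, rpow_add_one (by positivity), ← sqrt_eq_rpow,
      mul_comm]
  rw [hpow]
  by_cases h3 : n = 3
  · subst h3
    have : (1 : ℝ) < √3 := by rw [lt_sqrt zero_le_one]; norm_num
    norm_num [sqrtBound]
    linarith
  · have hn' : (1 : ℝ) ≤ n := by exact_mod_cast hn
    rw [sqrtBound, if_neg (by omega), if_neg h3]
    push_cast
    nlinarith [nat_sqrt_le_real_sqrt (a := n)]

lemma recurrence_term_le {n s k t u : ℤ} (hs : 2 ≤ s) (hk : s = 2 * k ∨ s = 2 * k + 1)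
    (hn : s * s ≤ n) (hn' : n ≤ s * s + 2 * s) (ht : 0 ≤ t) (ht' : t * t ≤ n - 4 * k - 1)
    (hu : 0 ≤ u) (hu' : u * u ≤ 2 * k) :
    4 * k ^ 2 + n - 4 * k + 2 * (n - 4 * k - 1) * t + 2 * (2 * (2 * k) * u) ≤ 2 * n * s - 1 := by
  have hu_le : u ≤ k := by nlinarith
  rcases hk with rfl | rfl
  · have ht_le : t ≤ 2 * k - 1 := by nlinarith
    nlinarith
  · rcases le_or_gt t (2 * k) with ht_le | ht_gt
    · nlinarith
    · obtain rfl : t = 2 * k + 1 := by nlinarith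
      nlinarith

lemma four_mul_sqrt_div_two_add_one_le {n : ℕ} (hn : 5 ≤ n) : 4 * (Nat.sqrt n / 2) + 1 ≤ n := by
  have hs : 2 ≤ Nat.sqrt n := Nat.le_sqrt.mpr (by omega)
  nlinarith [Nat.sqrt_le n, Nat.div_mul_le_self (Nat.sqrt n) 2]

lemma recurrence_term_le_sqrtBound {n : ℕ} (hn : 5 ≤ n) :
    let k := Nat.sqrt n / 2
    4 * (k : ℤ) ^ 2 + n - 4 * k + sqrtBound (n - 4 * k - 1) + 2 * sqrtBound (2 * k) ≤
      sqrtBound n := by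
  intro k
  set s := Nat.sqrt n
  have hs : 2 ≤ s := Nat.le_sqrt.mpr (by omega)
  have hk : 4 * k + 1 ≤ n := four_mul_sqrt_div_two_add_one_le hn
  have hn_le : n ≤ s * s + 2 * s := by nlinarith [Nat.lt_succ_sqrt n]
  have hm : ((n - 4 * k - 1 : ℕ) : ℤ) = n - 4 * k - 1 := by omega
  have key := recurrence_term_le (n := n) (s := s) (k := k) (t := Nat.sqrt (n - 4 * k - 1))
    (u := Nat.sqrt (2 * k)) (by exact_mod_cast hs) (by omega) (by exact_mod_cast Nat.sqrt_le n)
    (by exact_mod_cast hn_le) (by positivity) (by rw [← hm]; exact_mod_cast Nat.sqrt_le _)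
    (by positivity) (by exact_mod_cast Nat.sqrt_le (2 * k))
  have hbm := sqrtBound_le (n - 4 * k - 1)
  have hb2k : sqrtBound (2 * k) ≤ 2 * (2 * k) * Nat.sqrt (2 * k) := by
    exact_mod_cast sqrtBound_le (2 * k)
  rw [hm] at hbm
  rw [sqrtBound_of_five_le hn]
  linarith

theorem le_sqrtBound {g : ℕ → ℤ} (h0 : g 0 = 0)
    (hrec : ∀ n k : ℕ, 4 * k + 1 ≤ n →
      g n ≤ 4 * (k : ℤ) ^ 2 + n - 4 * k + g (n - 4 * k - 1) + 2 * g (2 * k)) (n : ℕ) :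
    g n ≤ sqrtBound n := by
  induction n using Nat.strong_induction_on with
  | _ n ih =>
    rcases (by omega : n = 0 ∨ (1 ≤ n ∧ n ≤ 4) ∨ 5 ≤ n) with rfl | ⟨h1, h4⟩ | hn
    · simp [h0, sqrtBound]
    · have := hrec n 0 (by omega)
      simp only [Nat.cast_zero, mul_zero, Nat.sub_zero, h0] at this
      linarith [ih (n - 1) (by omega), add_sqrtBound_sub_one_le h1 h4]
    · have hk := four_mul_sqrt_div_two_add_one_le hn
      linarith [hrec n _ hk, ih (n - 4 * (Nat.sqrt n / 2) - 1) (by omega),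
        ih (2 * (Nat.sqrt n / 2)) (by omega), recurrence_term_le_sqrtBound hn]

/-- Let `g* : ℕ → ℤ` be the minimal function with `g*(0) = 0` satisfying
the recurrence `g*(n) = min over 0 ≤ k, 4k+1 ≤ n of [4k² + n − 4k + g*(n−4k−1) + 2g*(2k)]`
(for `n ≥ 1`; i.e. `g*(n)` equals that minimum).  Then `g*(n) < 2n^{3/2}` for all `n ≥ 1`. -/
theorem gstar_lt (g : ℕ → ℤ) (h0 : g 0 = 0)
    (hmin : ∀ n : ℕ, 1 ≤ n →
      IsLeast {x : ℤ | ∃ k : ℕ, 4 * k + 1 ≤ n ∧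
        x = 4 * (k : ℤ) ^ 2 + (n : ℤ) - 4 * (k : ℤ) + g (n - 4 * k - 1) + 2 * g (2 * k)}
        (g n)) :
    ∀ n : ℕ, 1 ≤ n → (g n : ℝ) < 2 * (n : ℝ) ^ (3 / 2 : ℝ) := by
  intro n hn
  have hrec : ∀ n k : ℕ, 4 * k + 1 ≤ n →
      g n ≤ 4 * (k : ℤ) ^ 2 + n - 4 * k + g (n - 4 * k - 1) + 2 * g (2 * k) :=
    fun n k hk => (hmin n (by omega)).2 ⟨k, hk, rfl⟩
  calc (g n : ℝ) ≤ sqrtBound n := by exact_mod_cast le_sqrtBound h0 hrec n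
    _ < 2 * (n : ℝ) ^ (3 / 2 : ℝ) := sqrtBound_lt_two_mul_rpow hn
end

section
/- Suppose N ≤ M ≤ L are positive reals and (α,β,γ) with α,β,γ ≥ 0, α+β+γ = 1 maximizes min(Nαβ/(α+β), Mαγ/(α+γ), Lβγ/(β+γ)) (with the convention that a term is 0 if its denominator is 0). Then at the maximizer, Nαβ/(α+β) = Mαγ/(α+γ) ≤ Lβγ/(β+γ). -/
/-!
At a maximizer all weights are positive, and no direction `(u, v, w)` with `u + v + w = 0`
can raise every term of the minimum that equals it while the others keep their slack. The
derivative of `ε ↦ frac c (x + εu) (y + εv)` at `0` has the sign of `y²u + x²v`, and explicit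
directions exclude every pattern of minimal terms except "first = second ≤ third", with one
exception: first = third < second when `β² = α² + γ²`, where no direction raises both the first
and the third term; there `M ≤ L` shows directly that the second term is at most the first.
The reverse inequality follows by the symmetry exchanging `(N, β)` with `(M, γ)`.
-/

open Filter Topology

/-- `c·x·y/(x+y)`, with the convention that the value is `0` when the denominator
vanishes. -/
noncomputable def frac (c x y : ℝ) : ℝ := if x + y = 0 then 0 else c * x * y / (x + y)

-- Lean's `a / 0 = 0` already implements the convention of `frac`.
theorem frac_eq_div (c x y : ℝ) : frac c x y = c * x * y / (x + y) := by
  unfold frac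
  split_ifs with h <;> simp [h]

theorem frac_comm (c x y : ℝ) : frac c x y = frac c y x := by
  rw [frac_eq_div, frac_eq_div, add_comm x, mul_right_comm]

theorem hasDerivAt_frac_line (c x y u v : ℝ) (hxy : x + y ≠ 0) :
    HasDerivAt (fun ε => frac c (x + ε * u) (y + ε * v))
      (c * (y ^ 2 * u + x ^ 2 * v) / (x + y) ^ 2) 0 := by
  have hx : HasDerivAt (fun ε : ℝ => x + ε * u) u 0 := by
    simpa using ((hasDerivAt_id (0 : ℝ)).mul_const u).const_add x
  have hy : HasDerivAt (fun ε : ℝ => y + ε * v) v 0 := by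
    simpa using ((hasDerivAt_id (0 : ℝ)).mul_const v).const_add y
  have h := ((hx.const_mul c).mul hy).div (hx.add hy) (by simpa using hxy)
  simp only [frac_eq_div]
  refine h.congr_deriv ?_
  simp only [Pi.add_apply, Pi.mul_apply, zero_mul, add_zero]
  field_simp
  ring

theorem eventually_lt_of_hasDerivAt {g : ℝ → ℝ} {g' x V : ℝ} (hg : HasDerivAt g g' x)
    (h : V < g x ∨ V ≤ g x ∧ 0 < g') : ∀ᶠ y in 𝓝[>] x, V < g y := by
  rcases h with hlt | ⟨hle, hpos⟩
  · exact (hg.continuousAt.eventually (lt_mem_nhds hlt)).filter_mono nhdsWithin_le_nhds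
  · have hslope := ((hasDerivAt_iff_tendsto_slope.mp hg).mono_left (nhdsGT_le_nhdsNE x)).eventually
      (lt_mem_nhds hpos)
    filter_upwards [hslope, self_mem_nhdsWithin] with y hy hxy
    rw [slope_def_field, div_pos_iff_of_pos_right (sub_pos.mpr hxy), sub_pos] at hy
    exact hle.trans_lt hy

theorem eventually_lt_frac_line {c x y u v V : ℝ} (hc : 0 < c) (hxy : 0 < x + y)
    (hV : V ≤ frac c x y) (h : V < frac c x y ∨ 0 < y ^ 2 * u + x ^ 2 * v) :
    ∀ᶠ ε in 𝓝[>] 0, V < frac c (x + ε * u) (y + ε * v) := by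
  refine eventually_lt_of_hasDerivAt (hasDerivAt_frac_line c x y u v hxy.ne') ?_
  simp only [zero_mul, add_zero]
  exact h.imp_right fun hd => ⟨hV, by positivity⟩

noncomputable def objective (N M L α β γ : ℝ) : ℝ :=
  min (min (frac N α β) (frac M α γ)) (frac L β γ)

theorem objective_swap (N M L α β γ : ℝ) : objective M N L α γ β = objective N M L α β γ := by
  rw [objective, objective, min_comm (frac M α γ), frac_comm L]

structure IsSimplexMaximizer (N M L α β γ : ℝ) : Prop where
  nonneg₁ : 0 ≤ α
  nonneg₂ : 0 ≤ β
  nonneg₃ : 0 ≤ γ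
  sum_eq_one : α + β + γ = 1
  objective_le : ∀ α' β' γ' : ℝ, 0 ≤ α' → 0 ≤ β' → 0 ≤ γ' → α' + β' + γ' = 1 →
    objective N M L α' β' γ' ≤ objective N M L α β γ

namespace IsSimplexMaximizer

variable {N M L α β γ : ℝ}

theorem swap (h : IsSimplexMaximizer N M L α β γ) : IsSimplexMaximizer M N L α γ β where
  nonneg₁ := h.nonneg₁
  nonneg₂ := h.nonneg₃
  nonneg₃ := h.nonneg₂
  sum_eq_one := by linarith [h.sum_eq_one]
  objective_le α' γ' β' hα' hγ' hβ' hsum := by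
    rw [objective_swap N M L, objective_swap N M L]
    exact h.objective_le α' β' γ' hα' hβ' hγ' (by linarith)

theorem objective_pos (h : IsSimplexMaximizer N M L α β γ) (hN : 0 < N) (hM : 0 < M)
    (hL : 0 < L) : 0 < objective N M L α β γ := by
  refine lt_of_lt_of_le ?_ (h.objective_le (1 / 3) (1 / 3) (1 / 3) (by norm_num) (by norm_num)
    (by norm_num) (by norm_num))
  simp only [objective, frac_eq_div, lt_min_iff]
  refine ⟨⟨?_, ?_⟩, ?_⟩ <;> positivity

theorem pos (h : IsSimplexMaximizer N M L α β γ) (hN : 0 < N) (hM : 0 < M) (hL : 0 < L) :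
    0 < α ∧ 0 < β ∧ 0 < γ := by
  have hV := h.objective_pos hN hM hL
  have h₁ : 0 < frac N α β := hV.trans_le ((min_le_left _ _).trans (min_le_left _ _))
  have h₂ : 0 < frac M α γ := hV.trans_le ((min_le_left _ _).trans (min_le_right _ _))
  refine ⟨h.nonneg₁.lt_of_ne ?_, h.nonneg₂.lt_of_ne ?_, h.nonneg₃.lt_of_ne ?_⟩ <;> rintro rfl
  all_goals simp [frac_eq_div] at h₁ h₂

-- `β²u + α²v`, ... are the numerators of the derivatives from `hasDerivAt_frac_line`.
theorem not_ascent (h : IsSimplexMaximizer N M L α β γ) (hN : 0 < N) (hM : 0 < M)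
    (hL : 0 < L) {u v w : ℝ} (huvw : u + v + w = 0)
    (h₁ : objective N M L α β γ < frac N α β ∨ 0 < β ^ 2 * u + α ^ 2 * v)
    (h₂ : objective N M L α β γ < frac M α γ ∨ 0 < γ ^ 2 * u + α ^ 2 * w)
    (h₃ : objective N M L α β γ < frac L β γ ∨ 0 < γ ^ 2 * v + β ^ 2 * w) : False := by
  obtain ⟨hα, hβ, hγ⟩ := h.pos hN hM hL
  set V := objective N M L α β γ
  have hV₁ : V ≤ frac N α β := (min_le_left _ _).trans (min_le_left _ _)
  have hV₂ : V ≤ frac M α γ := (min_le_left _ _).trans (min_le_right _ _)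
  have hV₃ : V ≤ frac L β γ := min_le_right _ _
  have hcoord : ∀ {x : ℝ} (t : ℝ), 0 < x → ∀ᶠ ε in 𝓝[>] (0 : ℝ), 0 < x + ε * t := fun t hx =>
    ((continuous_const.add (continuous_id.mul continuous_const)).tendsto' 0 _ (by simp)).eventually
      (lt_mem_nhds hx) |>.filter_mono nhdsWithin_le_nhds
  obtain ⟨ε, ⟨⟨hα', hβ'⟩, hγ'⟩, ⟨e₁, e₂⟩, e₃⟩ :=
    (((hcoord u hα).and (hcoord v hβ)).and (hcoord w hγ)).and
      (((eventually_lt_frac_line hN (by positivity) hV₁ h₁).and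
        (eventually_lt_frac_line hM (by positivity) hV₂ h₂)).and
        (eventually_lt_frac_line hL (by positivity) hV₃ h₃)) |>.exists
  have hle := h.objective_le _ _ _ hα'.le hβ'.le hγ'.le
    (by linear_combination h.sum_eq_one + ε * huvw)
  exact hle.not_gt (lt_min (lt_min e₁ e₂) e₃)

end IsSimplexMaximizer

theorem frac_le_frac_of_sq_eq_add_sq {N M L α β γ : ℝ} (hα : 0 < α) (hβ : 0 < β) (hγ : 0 < γ)
    (hN : 0 ≤ N) (hML : M ≤ L) (hsq : α ^ 2 + γ ^ 2 - β ^ 2 = 0)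
    (h₁₃ : frac N α β = frac L β γ) : frac M α γ ≤ frac N α β := by
  have hαβ : α ≤ β := by nlinarith
  rw [frac_eq_div, frac_eq_div] at h₁₃ ⊢
  rw [div_eq_div_iff (by positivity) (by positivity)] at h₁₃
  rw [div_le_div_iff₀ (by positivity) (by positivity)]
  -- `M γ (α+β) ≤ L γ (α+β) = N α (β+γ) ≤ N β (α+γ)`, all multiplied by `α β`
  nlinarith [mul_le_mul_of_nonneg_right hML (by positivity : 0 ≤ α * β * γ * (α + β)),
    mul_le_mul_of_nonneg_left hαβ (by positivity : 0 ≤ N * α * β * γ)]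

namespace IsSimplexMaximizer

variable {N M L α β γ : ℝ}

theorem min_le_third (h : IsSimplexMaximizer N M L α β γ) (hN : 0 < N) (hM : 0 < M)
    (hL : 0 < L) : min (frac N α β) (frac M α γ) ≤ frac L β γ := by
  by_contra! h₃
  have hV : objective N M L α β γ = frac L β γ := min_eq_right h₃.le
  obtain ⟨h₁, h₂⟩ := lt_min_iff.mp h₃
  obtain ⟨-, -, hγ⟩ := h.pos hN hM hL
  exact h.not_ascent hN hM hL (u := -1) (v := 1) (w := 0) (by ring) (.inl (hV ▸ h₁))
    (.inl (hV ▸ h₂)) (.inr (by positivity))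

theorem second_le_first (h : IsSimplexMaximizer N M L α β γ) (hN : 0 < N) (hM : 0 < M)
    (hL : 0 < L) (hML : M ≤ L) : frac M α γ ≤ frac N α β := by
  by_contra! h₁₂
  obtain ⟨hα, hβ, hγ⟩ := h.pos hN hM hL
  have h₁₃ : frac N α β ≤ frac L β γ := min_eq_left h₁₂.le ▸ h.min_le_third hN hM hL
  have hV : objective N M L α β γ = frac N α β := by
    rw [objective, min_eq_left h₁₂.le, min_eq_left h₁₃]
  rcases h₁₃.lt_or_eq with h₁₃ | h₁₃
  · exact h.not_ascent hN hM hL (u := 1) (v := 0) (w := -1) (by ring) (.inr (by positivity))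
      (.inl (hV ▸ h₁₂)) (.inl (hV ▸ h₁₃))
  set s := α ^ 2 + γ ^ 2 - β ^ 2
  rcases eq_or_ne s 0 with hs | hs
  · exact (frac_le_frac_of_sq_eq_add_sq hα hβ hγ hN.le hML hs h₁₃).not_gt h₁₂
  -- `s = 0` is exactly when no direction raises the first and third terms together;
  -- along this one both derivative numerators equal `(β s)²`.
  exact h.not_ascent hN hM hL (u := s * (γ ^ 2 - β ^ 2 - α ^ 2)) (v := 2 * s * β ^ 2)
    (w := s * (α ^ 2 - β ^ 2 - γ ^ 2)) (by ring)
    (.inr (lt_of_lt_of_eq (by positivity : 0 < (β * s) ^ 2) (by ring)))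
    (.inl (hV ▸ h₁₂))
    (.inr (lt_of_lt_of_eq (by positivity : 0 < (β * s) ^ 2) (by ring)))

end IsSimplexMaximizer

/-- Suppose `N ≤ M ≤ L` are positive reals and `(α,β,γ)` with
`α,β,γ ≥ 0`, `α+β+γ = 1` maximizes
`min(Nαβ/(α+β), Mαγ/(α+γ), Lβγ/(β+γ))` (a term being `0` when its denominator is `0`).
Then at the maximizer `Nαβ/(α+β) = Mαγ/(α+γ) ≤ Lβγ/(β+γ)`. -/
theorem maximizer_equalities
    (N M L : ℝ) (hN : 0 < N) (hNM : N ≤ M) (hML : M ≤ L)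
    (α β γ : ℝ) (hα : 0 ≤ α) (hβ : 0 ≤ β) (hγ : 0 ≤ γ) (hsum : α + β + γ = 1)
    (hmax : ∀ α' β' γ' : ℝ, 0 ≤ α' → 0 ≤ β' → 0 ≤ γ' → α' + β' + γ' = 1 →
      min (min (frac N α' β') (frac M α' γ')) (frac L β' γ') ≤
        min (min (frac N α β) (frac M α γ)) (frac L β γ)) :
    frac N α β = frac M α γ ∧ frac M α γ ≤ frac L β γ := by
  have hM : 0 < M := hN.trans_le hNM
  have hL : 0 < L := hM.trans_le hML
  have h : IsSimplexMaximizer N M L α β γ := ⟨hα, hβ, hγ, hsum, hmax⟩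
  have h₂₁ := h.second_le_first hN hM hL hML
  have h₁₂ := h.swap.second_le_first hM hN hL (hNM.trans hML)
  refine ⟨le_antisymm h₁₂ h₂₁, ?_⟩
  simpa only [min_eq_right h₂₁] using h.min_le_third hN hM hL
end

section
/- Let 0 < μ ≤ 1 and let α, β, γ ≥ 0 with α + β + γ = 1 satisfy the constraint μ·αβ/(α+β) = αγ/(α+γ) (fractions interpreted as 0 when denominators vanish). Then αβ/(α+β) < (1/4)(1 − μ/4). -/
/-- `x·y/(x+y)`, with the convention that the value is `0` when the denominator
vanishes. -/
noncomputable def hmean (x y : ℝ) : ℝ := if x + y = 0 then 0 else x * y / (x + y)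

/-!
If `αβ/(α+β) ≥ c := (1/4)(1 - μ/4)`, then `α + β ≥ 4c = 1 - μ/4` because `αβ/(α+β) ≤ (α+β)/4`,
so `γ ≤ μ/4`. As `t ↦ t(1-t)` increases on `[0, 1/2]`, this gives
`αγ/(α+γ) < γ(1-γ) ≤ (μ/4)(1 - μ/4) = μc ≤ μ·αβ/(α+β)`, contradicting the constraint.
-/

@[simp]
theorem hmean_zero_right (x : ℝ) : hmean x 0 = 0 := by
  simp [hmean]

theorem hmean_le_add_div_four {x y : ℝ} (h : 0 ≤ x + y) : hmean x y ≤ (x + y) / 4 := by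
  unfold hmean
  split_ifs with h0
  · linarith
  · rw [div_le_div_iff₀ (h.lt_of_ne' h0) four_pos]
    nlinarith [sq_nonneg (x - y)]

theorem hmean_lt_mul_one_sub {x y : ℝ} (hx : 0 ≤ x) (hy : 0 < y) (hxy : x + y < 1) :
    hmean x y < y * (1 - y) := by
  have hpos : 0 < x + y := by linarith
  rw [hmean, if_neg hpos.ne', div_lt_iff₀ hpos]
  nlinarith [mul_pos hy (by linarith : 0 < 1 - x - y)]

theorem mul_one_sub_le_mul_one_sub {a b : ℝ} (hab : a ≤ b) (h : a + b ≤ 1) :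
    a * (1 - a) ≤ b * (1 - b) := by
  nlinarith [mul_nonneg (sub_nonneg.2 hab) (sub_nonneg.2 h)]

/-- Let `0 < μ ≤ 1` and let `α, β, γ ≥ 0` with `α + β + γ = 1` satisfy the
constraint `μ·αβ/(α+β) = αγ/(α+γ)` (fractions interpreted as `0` when denominators
vanish).  Then `αβ/(α+β) < (1/4)(1 − μ/4)`. -/
theorem key_constraint_bound
    (μ : ℝ) (hμ0 : 0 < μ) (hμ1 : μ ≤ 1)
    (α β γ : ℝ) (hα : 0 ≤ α) (hβ : 0 ≤ β) (hγ : 0 ≤ γ) (hsum : α + β + γ = 1)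
    (hconstraint : μ * hmean α β = hmean α γ) :
    hmean α β < (1 / 4) * (1 - μ / 4) := by
  by_contra! hcon
  have hpos : 0 < hmean α β := lt_of_lt_of_le (by nlinarith) hcon
  have hβ0 : 0 < β := hβ.lt_of_ne <| by
    rintro rfl
    simp at hpos
  have hγ0 : 0 < γ := hγ.lt_of_ne <| by
    rintro rfl
    rw [hmean_zero_right] at hconstraint
    exact (mul_pos hμ0 hpos).ne' hconstraint
  have hγle : γ ≤ μ / 4 := by linarith [hmean_le_add_div_four (add_nonneg hα hβ)]
  refine lt_irrefl (μ * ((1 / 4) * (1 - μ / 4))) ?_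
  calc μ * ((1 / 4) * (1 - μ / 4)) ≤ μ * hmean α β := by gcongr
    _ = hmean α γ := hconstraint
    _ < γ * (1 - γ) := hmean_lt_mul_one_sub hα hγ0 (by linarith)
    _ ≤ μ / 4 * (1 - μ / 4) := mul_one_sub_le_mul_one_sub hγle (by linarith)
    _ = μ * ((1 / 4) * (1 - μ / 4)) := by ring
end

section
/- For λ ∈ (0,1], the value max over γ ∈ [0,1] of min((1−2γ)γ/(1−γ), γ/(2λ)) equals 3 − 2√2 if λ ≤ (2+√2)/4, and equals (2λ−1)/(2λ(4λ−1)) if (2+√2)/4 < λ ≤ 1. -/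
/-!
With `t = 1 - γ` the first branch is `3 - (2 t + 1 / t)`. By AM-GM it is at most `3 - 2√2`, with
equality at `γ = 1 - √2 / 2`, and it decreases on `[1 - √2 / 2, 1)`; the second branch `γ / (2λ)`
increases. For `λ ≤ (2 + √2) / 4` the line lies above the first branch at its peak, so the maximum
is `3 - 2√2`. Otherwise the peak lies above the line, and the maximum of the minimum is reached
where the branches cross, at `γ = (2λ - 1) / (4λ - 1)`.
-/

open Real Set

lemma two_mul_sqrt_two_le_two_mul_add_inv {t : ℝ} (ht : 0 < t) : 2 * √2 ≤ 2 * t + t⁻¹ := by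
  have key : 2 * t + t⁻¹ - 2 * √2 = (√2 * t - 1) ^ 2 / t := by
    field_simp
    ring_nf
    rw [sq_sqrt zero_le_two]
  have : 0 ≤ (√2 * t - 1) ^ 2 / t := by positivity
  linarith

lemma two_mul_add_inv_antitoneOn : AntitoneOn (fun t : ℝ => 2 * t + t⁻¹) (Ioc 0 (√2 / 2)) := by
  rintro s ⟨hs, -⟩ t ⟨ht, ht2⟩ hst
  have hprod : s * t ≤ 1 / 2 := by nlinarith [sq_sqrt zero_le_two]
  have : 2 * (t - s) ≤ s⁻¹ - t⁻¹ := by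
    rw [inv_sub_inv hs.ne' ht.ne', le_div_iff₀ (by positivity)]
    nlinarith
  dsimp only
  linarith

lemma one_sub_two_mul_mul_div_one_sub_eq {γ : ℝ} (hγ : γ ≠ 1) :
    (1 - 2 * γ) * γ / (1 - γ) = 3 - (2 * (1 - γ) + (1 - γ)⁻¹) := by
  have : 1 - γ ≠ 0 := sub_ne_zero.2 hγ.symm
  field_simp
  ring

lemma one_sub_two_mul_mul_div_one_sub_le {γ : ℝ} (hγ : γ ≤ 1) :
    (1 - 2 * γ) * γ / (1 - γ) ≤ 3 - 2 * √2 := by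
  rcases hγ.eq_or_lt with rfl | hγ
  · nlinarith [sq_sqrt zero_le_two, sqrt_nonneg 2]
  · rw [one_sub_two_mul_mul_div_one_sub_eq hγ.ne]
    linarith [two_mul_sqrt_two_le_two_mul_add_inv (sub_pos.2 hγ)]

lemma one_sub_two_mul_mul_div_one_sub_eq_three_sub_two_mul_sqrt_two :
    (1 - 2 * (1 - √2 / 2)) * (1 - √2 / 2) / (1 - (1 - √2 / 2)) = 3 - 2 * √2 := by
  have hs : 0 < √2 := by positivity
  rw [one_sub_two_mul_mul_div_one_sub_eq (by linarith), sub_sub_cancel, inv_div,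
    div_sqrt]
  ring

lemma one_sub_two_mul_mul_div_one_sub_antitoneOn :
    AntitoneOn (fun γ : ℝ => (1 - 2 * γ) * γ / (1 - γ)) (Ico (1 - √2 / 2) 1) := by
  rintro x ⟨hx, hx1⟩ y ⟨hy, hy1⟩ hxy
  have := two_mul_add_inv_antitoneOn (a := 1 - y) (b := 1 - x) ⟨by linarith, by linarith⟩
    ⟨by linarith, by linarith⟩ (by linarith)
  dsimp only at this ⊢
  rw [one_sub_two_mul_mul_div_one_sub_eq hx1.ne, one_sub_two_mul_mul_div_one_sub_eq hy1.ne]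
  linarith

lemma crossing_mem_Ico {lam : ℝ} (hlam : (2 + √2) / 4 < lam) :
    (2 * lam - 1) / (4 * lam - 1) ∈ Ico (1 - √2 / 2) 1 := by
  have h4 : 0 < 4 * lam - 1 := by linarith [sqrt_nonneg 2]
  constructor
  · rw [le_div_iff₀ h4]
    nlinarith [sq_sqrt zero_le_two, sqrt_nonneg 2]
  · rw [div_lt_one h4]
    linarith [sqrt_nonneg 2]

lemma crossing_eq {lam : ℝ} (h2 : lam ≠ 0) (h4 : 4 * lam - 1 ≠ 0) :
    (1 - 2 * ((2 * lam - 1) / (4 * lam - 1))) * ((2 * lam - 1) / (4 * lam - 1)) /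
      (1 - (2 * lam - 1) / (4 * lam - 1)) = (2 * lam - 1) / (4 * lam - 1) / (2 * lam) := by
  have hgap : 1 - (2 * lam - 1) / (4 * lam - 1) = 2 * lam / (4 * lam - 1) := by
    rw [eq_div_iff h4, sub_mul, div_mul_cancel₀ _ h4]; ring
  have hgap2 : 1 - 2 * ((2 * lam - 1) / (4 * lam - 1)) = 1 / (4 * lam - 1) := by
    rw [eq_div_iff h4, sub_mul, mul_assoc, div_mul_cancel₀ _ h4]; ring
  rw [hgap, hgap2]
  field_simp

theorem isGreatest_min_of_le {lam : ℝ} (hlam0 : 0 < lam) (hlam : lam ≤ (2 + √2) / 4) :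
    IsGreatest {y : ℝ | ∃ γ ∈ Icc (0 : ℝ) 1,
        y = min ((1 - 2 * γ) * γ / (1 - γ)) (γ / (2 * lam))} (3 - 2 * √2) := by
  have hs : √2 ^ 2 = 2 := sq_sqrt zero_le_two
  have hs1 : 1 < √2 := by nlinarith [sqrt_nonneg 2]
  have hs2 := sqrt_two_lt_three_halves
  refine ⟨⟨1 - √2 / 2, ⟨by linarith, by linarith⟩, ?_⟩, ?_⟩
  · rw [one_sub_two_mul_mul_div_one_sub_eq_three_sub_two_mul_sqrt_two, min_eq_left]
    rw [le_div_iff₀ (by positivity)]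
    nlinarith
  · rintro _ ⟨γ, hγ, rfl⟩
    exact (min_le_left _ _).trans (one_sub_two_mul_mul_div_one_sub_le hγ.2)

theorem isGreatest_min_of_lt {lam : ℝ} (hlam : (2 + √2) / 4 < lam) :
    IsGreatest {y : ℝ | ∃ γ ∈ Icc (0 : ℝ) 1,
        y = min ((1 - 2 * γ) * γ / (1 - γ)) (γ / (2 * lam))}
      ((2 * lam - 1) / (2 * lam * (4 * lam - 1))) := by
  have hlam0 : 0 < lam := by linarith [sqrt_nonneg 2]
  have h4 : 0 < 4 * lam - 1 := by linarith [sqrt_nonneg 2]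
  have hmem := crossing_mem_Ico hlam
  have hcross := crossing_eq hlam0.ne' h4.ne'
  rw [mul_comm (2 * lam), ← div_div]
  set γc := (2 * lam - 1) / (4 * lam - 1)
  have hγc0 : 0 ≤ γc := by linarith [hmem.1, sqrt_two_lt_three_halves]
  refine ⟨⟨γc, ⟨hγc0, hmem.2.le⟩, by rw [hcross, min_self]⟩, ?_⟩
  rintro _ ⟨γ, ⟨hγ0, hγ1⟩, rfl⟩
  rcases le_or_gt γ γc with hle | hlt
  · exact (min_le_right _ _).trans (by gcongr)
  refine (min_le_left _ _).trans ?_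
  rcases hγ1.eq_or_lt with rfl | hγ1
  · -- at `γ = 1` the first branch is the junk value `x / 0 = 0`
    rw [sub_self, div_zero]
    positivity
  · rw [← hcross]
    exact one_sub_two_mul_mul_div_one_sub_antitoneOn hmem ⟨by linarith [hmem.1], hγ1⟩ hlt.le

theorem max_min_value_general (lam : ℝ) (hlam0 : 0 < lam) :
    (lam ≤ (2 + Real.sqrt 2) / 4 →
      IsGreatest {y : ℝ | ∃ γ ∈ Set.Icc (0 : ℝ) 1,
          y = min ((1 - 2 * γ) * γ / (1 - γ)) (γ / (2 * lam))}
        (3 - 2 * Real.sqrt 2)) ∧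
    ((2 + Real.sqrt 2) / 4 < lam →
      IsGreatest {y : ℝ | ∃ γ ∈ Set.Icc (0 : ℝ) 1,
          y = min ((1 - 2 * γ) * γ / (1 - γ)) (γ / (2 * lam))}
        ((2 * lam - 1) / (2 * lam * (4 * lam - 1)))) :=
  ⟨isGreatest_min_of_le hlam0, isGreatest_min_of_lt⟩

/-- For `λ ∈ (0,1]`, the value `max_{γ ∈ [0,1]} min((1−2γ)γ/(1−γ), γ/(2λ))`
equals `3 − 2√2` if `λ ≤ (2+√2)/4`, and equals `(2λ−1)/(2λ(4λ−1))` if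
`(2+√2)/4 < λ ≤ 1`.  (At `γ = 1` the division-by-zero convention of `ℝ` gives the first
fraction value `0`, which is a suitable interpretation there and does not affect the
maximum.) -/
theorem max_min_value (lam : ℝ) (hlam0 : 0 < lam) (hlam1 : lam ≤ 1) :
    (lam ≤ (2 + Real.sqrt 2) / 4 →
      IsGreatest {y : ℝ | ∃ γ ∈ Set.Icc (0 : ℝ) 1,
          y = min ((1 - 2 * γ) * γ / (1 - γ)) (γ / (2 * lam))}
        (3 - 2 * Real.sqrt 2)) ∧
    ((2 + Real.sqrt 2) / 4 < lam →
      IsGreatest {y : ℝ | ∃ γ ∈ Set.Icc (0 : ℝ) 1,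
          y = min ((1 - 2 * γ) * γ / (1 - γ)) (γ / (2 * lam))}
        ((2 * lam - 1) / (2 * lam * (4 * lam - 1)))) :=
  max_min_value_general lam hlam0
end

section
/- Let f, g : N → R satisfy f(0) = g(0) = 0, f(n) ≥ max over 0 ≤ k ≤ (n−1)/2 of [k(n−2k) + 2g(n−2k−1)], and g(n) ≥ max over 0 ≤ k ≤ (n−1)/4 of [k(n−4k) + g(n−4k−1) + 2g(2k)], together with f(n) ≤ n²/4 and g(n) ≤ n(n+1)/8 for all n. Then lim_{n→∞} f(n)/(4n²) = 1/16. -/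
/-!
With `g*(n) = n(n+1)/2 - 4 g(n)` (`eelDefect g n`), the recurrence for `g` turns into
`g*(n) ≤ 4k² + n - 4k + g*(n-4k-1) + 2 g*(2k)`. Taking `k = ⌊√n⌋ / 4` and `m = n - 4k - 1`, the
terms `4k² + n ≤ 5n/4` are absorbed by `10 (n√n - m√m) ≥ 10 (n - m) √m ≥ 7n - O(√n)`, while
`g*(2k) = O(n^{3/4})`; so by strong induction `g*(n) ≤ 10 n √n`. Hence
`f(n) ≥ 2 g(n-1) ≥ n²/4 - O(n^{3/2})`, which together with `f(n) ≤ n²/4` squeezes `f(n) / (4n²)`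
to `1/16`.
-/

open Filter Topology Real

lemma sub_mul_sqrt_le_mul_sqrt_sub_mul_sqrt {x y : ℝ} (hy : 0 ≤ y) (hyx : y ≤ x) :
    (x - y) * √y ≤ x * √x - y * √y := by
  have : √y ≤ √x := Real.sqrt_le_sqrt hyx
  nlinarith

lemma Nat.cast_sub_sub_one {R : Type*} [AddCommGroupWithOne R] {n j : ℕ} (h : j + 1 ≤ n) :
    ((n - j - 1 : ℕ) : R) = n - j - 1 := by
  rw [Nat.sub_sub, Nat.cast_sub h, Nat.cast_add, Nat.cast_one, sub_add_eq_sub_sub]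

lemma recurrence_step_le_mul_sqrt {x k : ℝ} (hx : 100 ≤ x) (hk : 0 ≤ k) (hkx : 4 * k ≤ √x)
    (hxk : √x ≤ 4 * k + 4) :
    4 * k ^ 2 + x - 4 * k + 10 * (x - 4 * k - 1) * √(x - 4 * k - 1)
      + 2 * (10 * (2 * k) * √(2 * k)) ≤ 10 * x * √x := by
  set t := √x
  have ht2 : t ^ 2 = x := Real.sq_sqrt (by linarith)
  have ht10 : 10 ≤ t := Real.le_sqrt_of_sq_le (by linarith)
  set m := x - 4 * k - 1
  have hmx : (x - m) * √m ≤ x * t - m * √m :=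
    sub_mul_sqrt_le_mul_sqrt_sub_mul_sqrt (by nlinarith) (by linarith)
  have hmt : 7 * t / 10 ≤ √m := Real.le_sqrt_of_sq_le (by nlinarith)
  have hkt : √(2 * k) ≤ t / 4 := (Real.sqrt_le_left (by positivity)).2 (by nlinarith)
  nlinarith [Real.sqrt_nonneg (2 * k),
    mul_le_mul hkt (show 2 * k ≤ t / 2 by linarith) (by positivity) (by positivity)]

lemma le_mul_sqrt_of_recurrence (h : ℕ → ℝ) (hle : ∀ n : ℕ, h n ≤ n * (n + 1) / 2)
    (hrec : ∀ n k : ℕ, 4 * k + 1 ≤ n →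
      h n ≤ 4 * k ^ 2 + n - 4 * k + h (n - 4 * k - 1) + 2 * h (2 * k)) (n : ℕ) :
    h n ≤ 10 * n * √n := by
  induction n using Nat.strong_induction_on with
  | _ n ih =>
  by_cases hn : n ≤ 100
  · have hsqrt : √(n : ℝ) ≤ 10 :=
      Real.sqrt_le_iff.2 ⟨by norm_num, by norm_num; exact_mod_cast hn⟩
    have hsq : √(n : ℝ) ^ 2 = n := Real.sq_sqrt (by positivity)
    have hquad : (n : ℝ) * (n + 1) / 2 ≤ n ^ 2 := by
      rcases Nat.eq_zero_or_pos n with rfl | hpos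
      · simp
      · have : (1 : ℝ) ≤ n := by exact_mod_cast hpos
        nlinarith
    nlinarith [hle n, Real.sqrt_nonneg (n : ℝ)]
  · set k := Nat.sqrt n / 4
    have hkx : 4 * (k : ℝ) ≤ √n :=
      le_trans (by exact_mod_cast Nat.mul_div_le (Nat.sqrt n) 4) Real.nat_sqrt_le_real_sqrt
    have hxk : √(n : ℝ) ≤ 4 * k + 4 :=
      Real.real_sqrt_le_nat_sqrt_succ.trans (by exact_mod_cast (by omega : Nat.sqrt n + 1 ≤ 4 * k + 4))
    have hkn : 4 * k + 1 ≤ n := by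
      have := Nat.sqrt_lt_self (by omega : 1 < n)
      omega
    have step := recurrence_step_le_mul_sqrt (x := n) (k := k)
      (by exact_mod_cast (by omega : 100 ≤ n)) (by positivity) hkx hxk
    have ih_rest := ih (n - 4 * k - 1) (by omega)
    have ih_half := ih (2 * k) (by omega)
    rw [Nat.cast_sub_sub_one hkn] at ih_rest
    push_cast at ih_rest ih_half
    linarith [hrec n k hkn]

noncomputable def eelDefect (g : ℕ → ℝ) (n : ℕ) : ℝ := n * (n + 1) / 2 - 4 * g n

section

variable {g : ℕ → ℝ}

lemma nonneg_of_eel_recurrence (hg0 : g 0 = 0)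
    (hg : ∀ n k : ℕ, 4 * k + 1 ≤ n →
      (k : ℝ) * ((n : ℝ) - 4 * k) + g (n - 4 * k - 1) + 2 * g (2 * k) ≤ g n) (n : ℕ) :
    0 ≤ g n :=
  hg0.ge.trans <| monotone_nat_of_le_succ
    (fun n => by simpa [hg0] using hg (n + 1) 0 (by omega)) n.zero_le

lemma eelDefect_recurrence
    (hg : ∀ n k : ℕ, 4 * k + 1 ≤ n →
      (k : ℝ) * ((n : ℝ) - 4 * k) + g (n - 4 * k - 1) + 2 * g (2 * k) ≤ g n)
    (n k : ℕ) (hkn : 4 * k + 1 ≤ n) :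
    eelDefect g n ≤
      4 * k ^ 2 + n - 4 * k + eelDefect g (n - 4 * k - 1) + 2 * eelDefect g (2 * k) := by
  simp only [eelDefect, Nat.cast_sub_sub_one hkn]
  push_cast
  linarith [hg n k hkn]

lemma eelDefect_le_mul_sqrt (hg0 : g 0 = 0)
    (hg : ∀ n k : ℕ, 4 * k + 1 ≤ n →
      (k : ℝ) * ((n : ℝ) - 4 * k) + g (n - 4 * k - 1) + 2 * g (2 * k) ≤ g n) (n : ℕ) :
    eelDefect g n ≤ 10 * n * √n :=
  le_mul_sqrt_of_recurrence _
    (fun n => by simp only [eelDefect]; linarith [nonneg_of_eel_recurrence hg0 hg n])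
    (eelDefect_recurrence hg) n

lemma one_div_sixteen_sub_le_of_eelDefect_le {F : ℝ} {n : ℕ} (hn : 1 ≤ n)
    (hF : 2 * g (n - 1) ≤ F) (hdef : eelDefect g (n - 1) ≤ 10 * (n - 1 : ℕ) * √(n - 1 : ℕ)) :
    1 / 16 - 2 / √(n : ℝ) ≤ F / (4 * (n : ℝ) ^ 2) := by
  have hn' : (1 : ℝ) ≤ n := by exact_mod_cast hn
  rw [eelDefect, Nat.cast_sub hn, Nat.cast_one] at hdef
  have hmono : 10 * ((n : ℝ) - 1) * √((n : ℝ) - 1) ≤ 10 * n * √n :=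
    mul_le_mul (by linarith) (Real.sqrt_le_sqrt (by linarith)) (by positivity) (by positivity)
  have hsqrt : 2 / √(n : ℝ) * (4 * n ^ 2) = 8 * n * √n := by
    rw [div_mul_eq_mul_div, div_eq_iff (by positivity)]
    linear_combination (-8 * (n : ℝ)) * Real.sq_sqrt (Nat.cast_nonneg n)
  have hn_le : (n : ℝ) ≤ n * √n := le_mul_of_one_le_right (by positivity) (Real.one_le_sqrt.2 hn')
  rw [le_div_iff₀ (by positivity), sub_mul, hsqrt]
  linarith

end

lemma tendsto_one_div_sixteen_sub_two_div_sqrt :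
    Tendsto (fun n : ℕ => 1 / 16 - 2 / √(n : ℝ)) atTop (𝓝 (1 / 16)) := by
  simpa using tendsto_const_nhds.sub
    (tendsto_const_nhds.div_atTop (tendsto_sqrt_atTop.comp tendsto_natCast_atTop_atTop) :
      Tendsto (fun n : ℕ => 2 / √(n : ℝ)) atTop (𝓝 0))

theorem eel_limit_general (f g : ℕ → ℝ) (hg0 : g 0 = 0)
    (hf : ∀ n k : ℕ, 2 * k + 1 ≤ n →
      (k : ℝ) * ((n : ℝ) - 2 * k) + 2 * g (n - 2 * k - 1) ≤ f n)
    (hg : ∀ n k : ℕ, 4 * k + 1 ≤ n →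
      (k : ℝ) * ((n : ℝ) - 4 * k) + g (n - 4 * k - 1) + 2 * g (2 * k) ≤ g n)
    (hfub : ∀ n : ℕ, f n ≤ (n : ℝ) ^ 2 / 4) :
    Filter.Tendsto (fun n : ℕ => f n / (4 * (n : ℝ) ^ 2)) Filter.atTop (nhds (1 / 16)) := by
  refine tendsto_of_tendsto_of_tendsto_of_le_of_le' tendsto_one_div_sixteen_sub_two_div_sqrt
    tendsto_const_nhds ?_ ?_ <;> filter_upwards [eventually_ge_atTop 1] with n hn
  · exact one_div_sixteen_sub_le_of_eelDefect_le hn (by simpa using hf n 0 hn)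
      (eelDefect_le_mul_sqrt hg0 hg (n - 1))
  · rw [div_le_iff₀ (by positivity)]
    linarith [hfub n]

/-- Let `f, g : ℕ → ℝ` satisfy `f(0) = g(0) = 0`,
`f(n) ≥ max_{0 ≤ k ≤ (n−1)/2} [k(n−2k) + 2g(n−2k−1)]`,
`g(n) ≥ max_{0 ≤ k ≤ (n−1)/4} [k(n−4k) + g(n−4k−1) + 2g(2k)]`
(expressed by quantifying over every admissible `k`), together with `f(n) ≤ n²/4` and
`g(n) ≤ n(n+1)/8` for all `n`.  Then `lim_{n→∞} f(n)/(4n²) = 1/16`. -/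
theorem eel_limit (f g : ℕ → ℝ) (hf0 : f 0 = 0) (hg0 : g 0 = 0)
    (hf : ∀ n k : ℕ, 2 * k + 1 ≤ n →
      (k : ℝ) * ((n : ℝ) - 2 * k) + 2 * g (n - 2 * k - 1) ≤ f n)
    (hg : ∀ n k : ℕ, 4 * k + 1 ≤ n →
      (k : ℝ) * ((n : ℝ) - 4 * k) + g (n - 4 * k - 1) + 2 * g (2 * k) ≤ g n)
    (hfub : ∀ n : ℕ, f n ≤ (n : ℝ) ^ 2 / 4)
    (hgub : ∀ n : ℕ, g n ≤ (n : ℝ) * ((n : ℝ) + 1) / 8) :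
    Filter.Tendsto (fun n : ℕ => f n / (4 * (n : ℝ) ^ 2)) Filter.atTop (nhds (1 / 16)) :=
  eel_limit_general f g hg0 hf hg hfub
end

section
/- Let a(x,y), b(x,y) ≥ 0 be real numbers indexed by pairs (x,y) in a finite set P, with a(x,y) + b(x,y) ≤ N for all (x,y), Σ a(x,y) = 2a and Σ b(x,y) = 2b where a + b > 0. Then (1/4)·Σ_{(x,y)∈P} a(x,y)·b(x,y) ≤ N·a·b/(2(a+b)). -/
/-! The map `(x, y) ↦ x y / (x + y)` is concave and homogeneous of degree one, so it lies below
its tangent plane at `(A, B)`, which passes through the origin: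
`x y (A + B)² ≤ (x + y) (B² x + A² y)`, the difference being `(B x - A y)²`.
With `x + y ≤ N` and summing over `P`, the right-hand side becomes linear in the data and sums to
`N (2 A B² + 2 A² B) = 2 N A B (A + B)`. -/

open Finset

theorem mul_mul_add_sq_le_add_mul (x y u v : ℝ) :
    x * y * (u + v) ^ 2 ≤ (x + y) * (v ^ 2 * x + u ^ 2 * y) := by
  nlinarith [sq_nonneg (v * x - u * y)]

theorem mul_mul_add_sq_le_of_add_le {x y N : ℝ} (hx : 0 ≤ x) (hy : 0 ≤ y) (hxy : x + y ≤ N)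
    (u v : ℝ) : x * y * (u + v) ^ 2 ≤ N * (v ^ 2 * x + u ^ 2 * y) :=
  (mul_mul_add_sq_le_add_mul x y u v).trans <|
    mul_le_mul_of_nonneg_right hxy (by positivity)

theorem relaxed_optimization_bound_general
    {P : Type*} [Fintype P] (N A B : ℝ)
    (a b : P → ℝ) (ha : ∀ p, 0 ≤ a p) (hb : ∀ p, 0 ≤ b p)
    (hab : ∀ p, a p + b p ≤ N)
    (hsa : ∑ p, a p = 2 * A) (hsb : ∑ p, b p = 2 * B) (hAB : 0 < A + B) :
    (1 / 4) * ∑ p, a p * b p ≤ N * A * B / (2 * (A + B)) := by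
  have hsum : (∑ p, a p * b p) * (A + B) ^ 2 ≤ N * (2 * A * B * (A + B)) :=
    calc (∑ p, a p * b p) * (A + B) ^ 2
        = ∑ p, a p * b p * (A + B) ^ 2 := sum_mul _ _ _
      _ ≤ ∑ p, N * (B ^ 2 * a p + A ^ 2 * b p) :=
        sum_le_sum fun p _ => mul_mul_add_sq_le_of_add_le (ha p) (hb p) (hab p) A B
      _ = N * (2 * A * B * (A + B)) := by
        rw [← mul_sum, sum_add_distrib, ← mul_sum, ← mul_sum, hsa, hsb]
        ring
  rw [le_div_iff₀ (by positivity)]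
  nlinarith [pow_pos hAB 2]

/-- Let `a(x,y), b(x,y) ≥ 0` be real numbers indexed by a finite set `P`,
with `a + b ≤ N` pointwise, `Σ a = 2A` and `Σ b = 2B` where `A + B > 0` (and `N > 0`).
Then `(1/4)·Σ a·b ≤ N·A·B/(2(A+B))`. -/
theorem relaxed_optimization_bound
    {P : Type*} [Fintype P] (N A B : ℝ) (hN : 0 < N)
    (a b : P → ℝ) (ha : ∀ p, 0 ≤ a p) (hb : ∀ p, 0 ≤ b p)
    (hab : ∀ p, a p + b p ≤ N)
    (hsa : ∑ p, a p = 2 * A) (hsb : ∑ p, b p = 2 * B) (hAB : 0 < A + B) :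
    (1 / 4) * ∑ p, a p * b p ≤ N * A * B / (2 * (A + B)) :=
  relaxed_optimization_bound_general N A B a b ha hb hab hsa hsb hAB
end
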